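/- arXiv:1711.02019 — 10 statements merged into one kernel-verified Lean document; each statement's English description precedes it below -/
import Mathlib

section
/- For every positive integer n and all real numbers s, s₀ with 0 ≤ s₀ < s, one has 0 < F(s) e^s − F(s₀) e^{s₀} < s^{n-1} e^s, where F(s) = ∑_{r=0}^{n-1} (-1)^{n-r-1} ((n-1)!/r!) s^r. -/
/-!
`F(x) e^x` is an antiderivative of `x^(n-1) e^x`, as follows by induction on `n` from the
recursion `F_{n+1}(x) = x^n - n F_n(x)`. Hence the difference in question is
`∫_{s₀}^{s} x^(n-1) e^x dx`, which is positive and at most `s^(n-1) (e^s - e^{s₀}) < s^(n-1) e^s`.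
-/

open Real Finset

open scoped Nat

noncomputable def powExpPoly (n : ℕ) (x : ℝ) : ℝ :=
  ∑ r ∈ range n, (-1 : ℝ) ^ (n - r - 1) * (((n - 1)! : ℝ) / (r ! : ℝ)) * x ^ r

lemma powExpPoly_one (x : ℝ) : powExpPoly 1 x = 1 := by
  simp [powExpPoly]

lemma powExpPoly_succ_succ (n : ℕ) (x : ℝ) :
    powExpPoly (n + 2) x = x ^ (n + 1) - (n + 1) * powExpPoly (n + 1) x := by
  simp only [powExpPoly, sum_range_succ _ (n + 1), mul_sum]
  have hterm : ∀ r ∈ range (n + 1),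
      (-1 : ℝ) ^ (n + 2 - r - 1) * (((n + 2 - 1)! : ℝ) / (r ! : ℝ)) * x ^ r =
        -((n + 1) * ((-1 : ℝ) ^ (n + 1 - r - 1) * (((n + 1 - 1)! : ℝ) / (r ! : ℝ)) * x ^ r)) := by
    intro r hr
    have hrn : r ≤ n := Nat.lt_succ_iff.mp (mem_range.mp hr)
    rw [show n + 2 - r - 1 = (n - r) + 1 by omega, show n + 1 - r - 1 = n - r by omega,
      show n + 2 - 1 = n + 1 by omega, Nat.add_sub_cancel, Nat.factorial_succ]
    push_cast
    ring
  rw [sum_congr rfl hterm, sum_neg_distrib, show n + 2 - (n + 1) - 1 = 0 by omega, show n + 2 - 1 = n + 1 by omega, pow_zero,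
    div_self (by positivity), one_mul, one_mul]
  ring

lemma hasDerivAt_powExpPoly_mul_exp (n : ℕ) (x : ℝ) :
    HasDerivAt (fun y ↦ powExpPoly (n + 1) y * exp y) (x ^ n * exp x) x := by
  induction n generalizing x with
  | zero => simpa [powExpPoly_one] using hasDerivAt_exp x
  | succ n ih =>
    have hrec : (fun y ↦ powExpPoly (n + 2) y * exp y) =
        fun y ↦ y ^ (n + 1) * exp y - (n + 1) * (powExpPoly (n + 1) y * exp y) := by
      funext y
      rw [powExpPoly_succ_succ]
      ring
    rw [hrec]
    refine (((hasDerivAt_pow (n + 1) x).mul (hasDerivAt_exp x)).sub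
      ((ih x).const_mul ((n : ℝ) + 1))).congr_deriv ?_
    push_cast
    ring

section IntegralPowMulExp

variable {a b : ℝ} (m : ℕ)

lemma intervalIntegrable_pow_mul_exp :
    IntervalIntegrable (fun x ↦ x ^ m * exp x) MeasureTheory.volume a b :=
  (by fun_prop : Continuous fun x : ℝ ↦ x ^ m * exp x).intervalIntegrable a b

lemma integral_pow_mul_exp_pos (ha : 0 ≤ a) (hab : a < b) :
    0 < ∫ x in a..b, x ^ m * exp x :=
  intervalIntegral.intervalIntegral_pos_of_pos_on (intervalIntegrable_pow_mul_exp m)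
    (fun x hx ↦ by have : 0 < x := ha.trans_lt hx.1; positivity) hab

lemma integral_pow_mul_exp_lt (ha : 0 ≤ a) (hab : a < b) :
    ∫ x in a..b, x ^ m * exp x < b ^ m * exp b := by
  have hb : 0 < b := ha.trans_lt hab
  calc ∫ x in a..b, x ^ m * exp x
      ≤ ∫ x in a..b, b ^ m * exp x := by
        refine intervalIntegral.integral_mono_on hab.le (intervalIntegrable_pow_mul_exp m)
          (Continuous.intervalIntegrable (by fun_prop) a b) ?_
        intro x hx
        gcongr
        exacts [ha.trans hx.1, hx.2]
    _ = b ^ m * (exp b - exp a) := by rw [intervalIntegral.integral_const_mul, integral_exp]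
    _ < b ^ m * exp b := by
        have : 0 < b ^ m * exp a := by positivity
        linarith [mul_sub (b ^ m) (exp b) (exp a)]

end IntegralPowMulExp

/-- For every positive integer `n` and reals `0 ≤ s₀ < s`,
`0 < F(s) e^s − F(s₀) e^{s₀} < s^{n-1} e^s`. -/
theorem stmt_1 (n : ℕ) (hn : 1 ≤ n)
    (F : ℝ → ℝ)
    (hF : ∀ x : ℝ, F x = ∑ r ∈ Finset.range n,
      (-1 : ℝ) ^ (n - r - 1) * ((Nat.factorial (n - 1) : ℝ) / (Nat.factorial r : ℝ)) * x ^ r)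
    (s s₀ : ℝ) (h0 : 0 ≤ s₀) (h1 : s₀ < s) :
    0 < F s * Real.exp s - F s₀ * Real.exp s₀ ∧
      F s * Real.exp s - F s₀ * Real.exp s₀ < s ^ (n - 1) * Real.exp s := by
  obtain ⟨m, rfl⟩ : ∃ m, n = m + 1 := ⟨n - 1, by omega⟩
  have hF' : F = powExpPoly (m + 1) := funext hF
  subst hF'
  have hFTC : ∫ x in s₀..s, x ^ m * exp x = powExpPoly (m + 1) s * exp s -
      powExpPoly (m + 1) s₀ * exp s₀ :=
    intervalIntegral.integral_eq_sub_of_hasDerivAt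
      (fun x _ ↦ hasDerivAt_powExpPoly_mul_exp m x) (intervalIntegrable_pow_mul_exp m)
  rw [← hFTC, Nat.add_sub_cancel]
  exact ⟨integral_pow_mul_exp_pos m h0 h1, integral_pow_mul_exp_lt m h0 h1⟩
end

section
/- Let n ≥ 1, a ≥ 0, and let φ : ℝ → ℝ be differentiable and satisfy F(φ(t)) e^{φ(t)} = e^{nt}/n + F(a) e^a with φ(t) > a ≥ 0 for all t, where F(s) = ∑_{r=0}^{n-1} (-1)^{n-r-1} ((n-1)!/r!) s^r. Then φ satisfies the ODE φ(t)^{n-1} φ'(t) e^{φ(t)} = e^{nt}, and 0 < φ'(t) < n for all t ∈ ℝ. -/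
open Real Finset

/-! `F(s) e^s` is a primitive of `s^(n-1) e^s`, by induction on `n` through the recursion
`F_(n+1)(s) = s^n - n F_n(s)`; differentiating the implicit equation therefore gives the ODE.
Since `e^(nt)/n = F(φ) e^φ - F(a) e^a < φ^(n-1) e^φ`, the ODE then forces `φ' < n`. -/

/-- The polynomial `F` of the statement, indexed by its degree `m = n - 1`. -/
noncomputable def expPolyPrimitive (m : ℕ) (x : ℝ) : ℝ :=
  ∑ r ∈ range (m + 1), (-1 : ℝ) ^ (m - r) * ((m.factorial : ℝ) / (r.factorial : ℝ)) * x ^ r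

@[simp]
theorem expPolyPrimitive_zero (x : ℝ) : expPolyPrimitive 0 x = 1 := by
  simp [expPolyPrimitive]

theorem expPolyPrimitive_succ (m : ℕ) (x : ℝ) :
    expPolyPrimitive (m + 1) x = x ^ (m + 1) - (m + 1) * expPolyPrimitive m x := by
  rw [expPolyPrimitive, sum_range_succ, Nat.sub_self, expPolyPrimitive, mul_sum,
    div_self (by positivity), pow_zero, one_mul, one_mul, add_comm, sub_eq_add_neg, ← sum_neg_distrib]
  congr 1
  refine sum_congr rfl fun r hr => ?_
  rw [Nat.sub_add_comm (Nat.lt_succ_iff.mp (mem_range.mp hr)), pow_succ, Nat.factorial_succ]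
  push_cast
  ring

theorem hasDerivAt_expPolyPrimitive_mul_exp (m : ℕ) (x : ℝ) :
    HasDerivAt (fun x => expPolyPrimitive m x * exp x) (x ^ m * exp x) x := by
  induction m with
  | zero => simpa using hasDerivAt_exp x
  | succ m ih =>
    simp only [expPolyPrimitive_succ, sub_mul, mul_assoc]
    refine (((hasDerivAt_pow (m + 1) x).mul (hasDerivAt_exp x)).sub
      (ih.const_mul ((m : ℝ) + 1))).congr_deriv ?_
    push_cast
    ring

theorem strictMonoOn_expPolyPrimitive_mul_exp (m : ℕ) :
    StrictMonoOn (fun x => expPolyPrimitive m x * exp x) (Set.Ici 0) := by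
  refine strictMonoOn_of_deriv_pos (convex_Ici 0)
    (fun x _ => (hasDerivAt_expPolyPrimitive_mul_exp m x).continuousAt.continuousWithinAt)
    fun x hx => ?_
  rw [interior_Ici, Set.mem_Ioi] at hx
  rw [(hasDerivAt_expPolyPrimitive_mul_exp m x).deriv]
  positivity

/-- For `m = k + 1` the increment is `s ^ m * exp s - a ^ m * exp a` minus `m` times the increment
of the `k`-th primitive, which is positive since that primitive is increasing on `[0, ∞)`. -/
theorem expPolyPrimitive_mul_exp_sub_lt (m : ℕ) {a s : ℝ} (ha : 0 ≤ a) (has : a < s) :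
    expPolyPrimitive m s * exp s - expPolyPrimitive m a * exp a < s ^ m * exp s := by
  cases m with
  | zero => simpa using exp_pos a
  | succ k =>
    have hmono := strictMonoOn_expPolyPrimitive_mul_exp k ha (ha.trans has.le : (0 : ℝ) ≤ s) has
    have : 0 ≤ a ^ (k + 1) * exp a := by positivity
    simp only [expPolyPrimitive_succ, sub_mul, mul_assoc] at hmono ⊢
    nlinarith

section ImplicitSolution

variable {m : ℕ} {c : ℝ} {φ : ℝ → ℝ}

theorem pow_mul_deriv_mul_exp_eq_of_expPolyPrimitive_eq (hφ : Differentiable ℝ φ)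
    (h : ∀ t, expPolyPrimitive m (φ t) * exp (φ t) = exp ((m + 1) * t) / (m + 1) + c) (t : ℝ) :
    φ t ^ m * deriv φ t * exp (φ t) = exp ((m + 1) * t) := by
  have hlhs := (hasDerivAt_expPolyPrimitive_mul_exp m (φ t)).comp t (hφ t).hasDerivAt
  have hrhs : HasDerivAt (fun t => exp ((m + 1) * t) / (m + 1) + c) (exp ((m + 1) * t)) t := by
    refine ((((hasDerivAt_id t).const_mul ((m : ℝ) + 1)).exp.div_const _).add_const c).congr_deriv ?_
    field_simp
    rfl
  rw [show (fun x => expPolyPrimitive m x * exp x) ∘ φ = _ from funext h] at hlhs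
  rw [mul_right_comm, hlhs.unique hrhs]

theorem deriv_lt_of_expPolyPrimitive_eq {a : ℝ} (ha : 0 ≤ a) (hφa : ∀ t, a < φ t)
    (hφ : Differentiable ℝ φ)
    (h : ∀ t, expPolyPrimitive m (φ t) * exp (φ t) =
      exp ((m + 1) * t) / (m + 1) + expPolyPrimitive m a * exp a) (t : ℝ) :
    deriv φ t < m + 1 := by
  have hode := pow_mul_deriv_mul_exp_eq_of_expPolyPrimitive_eq hφ h t
  have hinc := expPolyPrimitive_mul_exp_sub_lt m ha (hφa t)
  have hpos : 0 < φ t ^ m * exp (φ t) := by have := ha.trans_lt (hφa t); positivity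
  rw [h t, add_sub_cancel_right, div_lt_iff₀ (by positivity), ← hode, mul_right_comm] at hinc
  exact lt_of_mul_lt_mul_left hinc hpos.le

end ImplicitSolution

/-- If `φ` is differentiable and satisfies the implicit equation
`F(φ(t)) e^{φ(t)} = e^{nt}/n + F(a)e^a` with `φ > a ≥ 0`, then
`φ^{n-1} φ' e^{φ} = e^{nt}` and `0 < φ' < n`. -/
theorem stmt_3 (n : ℕ) (hn : 1 ≤ n) (a : ℝ) (ha : 0 ≤ a)
    (F : ℝ → ℝ)
    (hF : ∀ x : ℝ, F x = ∑ r ∈ Finset.range n,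
      (-1 : ℝ) ^ (n - r - 1) * ((Nat.factorial (n - 1) : ℝ) / (Nat.factorial r : ℝ)) * x ^ r)
    (φ : ℝ → ℝ) (hφdiff : Differentiable ℝ φ)
    (hφa : ∀ t, a < φ t)
    (hφeq : ∀ t, F (φ t) * Real.exp (φ t) = Real.exp (n * t) / n + F a * Real.exp a) :
    ∀ t : ℝ,
      φ t ^ (n - 1) * deriv φ t * Real.exp (φ t) = Real.exp (n * t) ∧
      0 < deriv φ t ∧ deriv φ t < n := by
  obtain ⟨m, rfl⟩ := Nat.exists_eq_add_of_le' hn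
  have hFm : F = expPolyPrimitive m := funext fun x => by
    rw [hF, expPolyPrimitive, Nat.add_sub_cancel]
    exact sum_congr rfl fun r _ => by rw [Nat.sub_right_comm, Nat.add_sub_cancel]
  subst hFm
  push_cast at hφeq ⊢
  intro t
  have hode := pow_mul_deriv_mul_exp_eq_of_expPolyPrimitive_eq hφdiff hφeq t
  have hpos : 0 < φ t ^ m * exp (φ t) := by have := ha.trans_lt (hφa t); positivity
  refine ⟨hode, ?_, deriv_lt_of_expPolyPrimitive_eq ha hφa hφdiff hφeq t⟩
  rw [mul_right_comm] at hode
  exact pos_of_mul_pos_right (hode ▸ exp_pos _) hpos.le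
end

section
/- Let n ≥ 1, a > 0, and let φ : ℝ → ℝ satisfy F(φ(t)) e^{φ(t)} = e^{nt}/n + F(a) e^a with φ(t) > a for all t, where F(s) = ∑_{r=0}^{n-1} (-1)^{n-r-1} ((n-1)!/r!) s^r. Then as t → −∞, φ(t) = a + (1/n) a^{1-n} e^{−a} e^{nt} + O(e^{2nt}); in particular φ(t) → a as t → −∞. -/
open Real Finset Filter Asymptotics

/-! Write `G(s) = F(s) e^s`. Then `G' (s) = s^{n-1} e^s =: g(s)`, so `φ(t)` solves
`G(φ(t)) = G(a) + ε(t)` with `ε(t) = e^{nt}/n → 0`. Since `g ≥ g(a) > 0` on `[a, ∞)`, `G` grows at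
least linearly to the right of `a`, which gives `0 < φ(t) - a ≤ ε(t)/g(a)`. A first-order Taylor
expansion `G(x) = G(a) + g(a)(x - a) + O((x - a)^2)`, valid because `g` is differentiable at `a`,
then yields `φ(t) = a + ε(t)/g(a) + O(ε(t)^2)`. -/

open Metric Topology

noncomputable def expPolyAntideriv (m : ℕ) (x : ℝ) : ℝ :=
  ∑ r ∈ range (m + 1), (-1) ^ (m - r) * ((m.factorial : ℝ) / r.factorial) * x ^ r

theorem expPolyAntideriv_zero (x : ℝ) : expPolyAntideriv 0 x = 1 := by
  simp [expPolyAntideriv]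

theorem expPolyAntideriv_succ (m : ℕ) (x : ℝ) :
    expPolyAntideriv (m + 1) x = x ^ (m + 1) - (m + 1) * expPolyAntideriv m x := by
  have hterm : ∀ r ∈ range (m + 1),
      (-1 : ℝ) ^ (m + 1 - r) * (((m + 1).factorial : ℝ) / r.factorial) * x ^ r
        = -((m + 1) * ((-1) ^ (m - r) * ((m.factorial : ℝ) / r.factorial) * x ^ r)) := by
    intro r hr
    rw [show m + 1 - r = m - r + 1 by have := mem_range.mp hr; omega, pow_succ,
      Nat.factorial_succ]
    push_cast
    ring
  rw [expPolyAntideriv, sum_range_succ, sum_congr rfl hterm, sum_neg_distrib, expPolyAntideriv,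
    mul_sum]
  simp only [tsub_self, pow_zero, ne_eq, Nat.cast_eq_zero, Nat.factorial_ne_zero, not_false_eq_true,
    div_self, mul_one, one_mul]
  exact neg_add_eq_sub _ _

theorem hasDerivAt_expPolyAntideriv_mul_exp (m : ℕ) (x : ℝ) :
    HasDerivAt (fun y => expPolyAntideriv m y * exp y) (x ^ m * exp x) x := by
  induction m with
  | zero => simpa [expPolyAntideriv_zero] using hasDerivAt_exp x
  | succ m ih =>
    have hsplit : (fun y => expPolyAntideriv (m + 1) y * exp y)
        = fun y => y ^ (m + 1) * exp y - (m + 1) * (expPolyAntideriv m y * exp y) := by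
      funext y
      rw [expPolyAntideriv_succ]
      ring
    rw [hsplit]
    refine (((hasDerivAt_pow (m + 1) x).fun_mul (hasDerivAt_exp x)).fun_sub
      (ih.const_mul ((m : ℝ) + 1))).congr_deriv ?_
    push_cast
    ring

theorem isBigO_sub_sub_mul_sq_of_hasDerivAt {G g : ℝ → ℝ} {a : ℝ}
    (hG : ∀ x, HasDerivAt G (g x) x) (hg : DifferentiableAt ℝ g a) :
    (fun x => G x - G a - g a * (x - a)) =O[𝓝 a] fun x => (x - a) ^ 2 := by
  obtain ⟨K, hK, hKg⟩ := hg.isBigO_sub.exists_pos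
  obtain ⟨δ, hδ, hball⟩ := eventually_nhds_iff_ball.mp hKg.bound
  refine IsBigO.of_bound K ?_
  filter_upwards [ball_mem_nhds a hδ] with x hx
  -- On the ball of radius `|x - a|` the derivative `g y - g a` is at most `K |x - a|`.
  have hderiv : ∀ y ∈ closedBall a (dist x a), HasDerivWithinAt (fun y => G y - g a * (y - a))
      (g y - g a) (closedBall a (dist x a)) y := fun y _ => by
    simpa using ((hG y).fun_sub (((hasDerivAt_id y).sub_const a).const_mul (g a))).hasDerivWithinAt
  have hbound : ∀ y ∈ closedBall a (dist x a), ‖g y - g a‖ ≤ K * dist x a := fun y hy =>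
    (hball y (closedBall_subset_ball hx hy)).trans (by gcongr; exact hy)
  have hmvt := (convex_closedBall a (dist x a)).norm_image_sub_le_of_norm_hasDerivWithin_le
    hderiv hbound (mem_closedBall_self dist_nonneg) (mem_closedBall.mpr le_rfl)
  simp only [sub_self, mul_zero, sub_zero] at hmvt
  simpa [Real.dist_eq, mul_assoc, sq, sub_sub, add_comm] using hmvt

theorem mul_sub_le_sub_of_le_hasDerivAt {G g : ℝ → ℝ} {a C x : ℝ}
    (hG : ∀ x, HasDerivAt G (g x) x) (hC : ∀ y, a ≤ y → C ≤ g y) (hx : a ≤ x) :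
    C * (x - a) ≤ G x - G a := by
  refine (convex_Ici a).mul_sub_le_image_sub_of_le_deriv
    (fun y _ => (hG y).continuousAt.continuousWithinAt)
    (fun y _ => (hG y).differentiableAt.differentiableWithinAt) (fun y hy => ?_)
    a Set.self_mem_Ici x hx hx
  rw [interior_Ici] at hy
  rw [(hG y).deriv]
  exact hC y (le_of_lt hy)

theorem tendsto_and_isBigO_of_map_eq_add {α : Type*} {l : Filter α} {G g : ℝ → ℝ} {a : ℝ}
    {φ ε : α → ℝ} (hG : ∀ x, HasDerivAt G (g x) x) (hg : DifferentiableAt ℝ g a)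
    (hga : 0 < g a) (hgmono : ∀ x, a ≤ x → g a ≤ g x) (hφa : ∀ t, a < φ t)
    (hφ : ∀ t, G (φ t) = G a + ε t) (hε : Tendsto ε l (𝓝 0)) :
    Tendsto φ l (𝓝 a) ∧ (fun t => φ t - (a + ε t / g a)) =O[l] fun t => ε t ^ 2 := by
  have hle : ∀ t, φ t - a ≤ ε t / g a := fun t => by
    rw [le_div_iff₀' hga, show ε t = G (φ t) - G a by linarith [hφ t]]
    exact mul_sub_le_sub_of_le_hasDerivAt hG hgmono (hφa t).le
  have hlim : Tendsto φ l (𝓝 a) :=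
    tendsto_of_tendsto_of_tendsto_of_le_of_le tendsto_const_nhds
      (by simpa using (hε.div_const (g a)).const_add a) (fun t => (hφa t).le)
      (fun t => by linarith [hle t])
  refine ⟨hlim, ?_⟩
  have hlin : (fun t => φ t - a) =O[l] ε := by
    refine IsBigO.of_bound (g a)⁻¹ (Eventually.of_forall fun t => ?_)
    have hpos : 0 < φ t - a := sub_pos.mpr (hφa t)
    have hεt : 0 < ε t := (div_pos_iff_of_pos_right hga).mp (hpos.trans_le (hle t))
    rw [Real.norm_of_nonneg hpos.le, Real.norm_of_nonneg hεt.le, ← div_eq_inv_mul]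
    exact hle t
  calc (fun t => φ t - (a + ε t / g a))
      = fun t => -(g a)⁻¹ * (G (φ t) - G a - g a * (φ t - a)) := by
        funext t
        rw [hφ t]
        field_simp
        ring
    _ =O[l] fun t => (φ t - a) ^ 2 :=
        ((isBigO_sub_sub_mul_sq_of_hasDerivAt hG hg).comp_tendsto hlim).const_mul_left _
    _ =O[l] fun t => ε t ^ 2 := hlin.pow 2

/-- For `a > 0`, as `t → −∞`,
`φ(t) = a + (1/n) a^{1-n} e^{−a} e^{nt} + O(e^{2nt})`; in particular `φ(t) → a`. -/
theorem stmt_5 (n : ℕ) (hn : 1 ≤ n) (a : ℝ) (ha : 0 < a)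
    (F : ℝ → ℝ)
    (hF : ∀ x : ℝ, F x = ∑ r ∈ Finset.range n,
      (-1 : ℝ) ^ (n - r - 1) * ((Nat.factorial (n - 1) : ℝ) / (Nat.factorial r : ℝ)) * x ^ r)
    (φ : ℝ → ℝ) (hφa : ∀ t, a < φ t)
    (hφeq : ∀ t, F (φ t) * Real.exp (φ t) = Real.exp (n * t) / n + F a * Real.exp a) :
    (fun t => φ t - (a + (1 / n) * a ^ (1 - (n : ℤ)) * Real.exp (-a) * Real.exp (n * t)))
      =O[atBot] (fun t => Real.exp (2 * n * t)) ∧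
    Filter.Tendsto φ atBot (nhds a) := by
  obtain ⟨m, rfl⟩ : ∃ m, n = m + 1 := ⟨n - 1, by omega⟩
  obtain rfl : F = expPolyAntideriv m := funext fun x => by
    rw [hF, expPolyAntideriv, Nat.add_sub_cancel]
    exact sum_congr rfl fun r _ => by rw [Nat.sub_right_comm, Nat.add_sub_cancel]
  set N : ℝ := ((m + 1 : ℕ) : ℝ)
  have hN : 0 < N := by positivity
  have hε : Tendsto (fun t => exp (N * t) / N) atBot (𝓝 0) := by
    simpa using (tendsto_exp_atBot.comp (tendsto_id.const_mul_atBot hN)).div_const N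
  obtain ⟨hlim, hO⟩ := tendsto_and_isBigO_of_map_eq_add (g := fun x => x ^ m * exp x)
    (hasDerivAt_expPolyAntideriv_mul_exp m) (by fun_prop) (by positivity)
    (fun x hx => by have := ha.le.trans hx; gcongr) hφa (fun t => by linarith [hφeq t]) hε
  refine ⟨?_, hlim⟩
  have hleading : ∀ t, a + 1 / N * a ^ (1 - ((m + 1 : ℕ) : ℤ)) * exp (-a) * exp (N * t)
      = a + exp (N * t) / N / (a ^ m * exp a) := fun t => by
    rw [show 1 - ((m + 1 : ℕ) : ℤ) = -(m : ℤ) by push_cast; ring, zpow_neg, zpow_natCast, exp_neg]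
    field_simp
  have hsq : (fun t => (exp (N * t) / N) ^ 2) = fun t => (N ^ 2)⁻¹ * exp (2 * N * t) := by
    funext t
    rw [div_pow, ← exp_nat_mul]
    push_cast
    ring_nf
  exact (hO.congr_left fun t => by rw [hleading]).trans
    (hsq ▸ (isBigO_refl _ _).const_mul_left _)
end

section
/- Let n ≥ 1 and let φ : ℝ → ℝ satisfy F(φ(t)) e^{φ(t)} = e^{nt}/n + F(0), with φ(t) > 0, where F(s) = ∑_{r=0}^{n-1} (-1)^{n-r-1} ((n-1)!/r!) s^r. Then as t → −∞, φ(t) = e^t − (1/(n+1)) e^{2t} + O(e^{3t}). -/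
/-!
Put `G s = F s * exp s - F 0`. Then `G' s = s ^ (n - 1) * exp s` and `G 0 = 0`, and the defining
relation of `φ` reads `G (φ t) = x ^ n / n` with `x = exp t`. Comparing derivatives with
`1 + s ≤ exp s ≤ 1 + s + s ^ 2` gives `G s = s ^ n / n + s ^ (n + 1) / (n + 1) + O(s ^ (n + 2))`,
and this Taylor polynomial takes the value `x ^ n / n + O(x ^ (n + 2))` at `ψ = x - x ^ 2 / (n + 1)`.
Since `G s - s ^ n / n` is increasing on `[0, ∞)`, `|φ ^ n - ψ ^ n| ≤ n |G φ - G ψ| = O(x ^ (n + 2))`,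
and `ψ ≥ x / 2` turns this into `|φ - ψ| = O(x ^ 3)`.
-/

open Real Finset Filter Asymptotics

noncomputable def caoPoly (n : ℕ) (s : ℝ) : ℝ :=
  ∑ r ∈ range n, (-1 : ℝ) ^ (n - r - 1) * ((Nat.factorial (n - 1) : ℝ) / (Nat.factorial r : ℝ)) * s ^ r

lemma caoPoly_succ (n : ℕ) (s : ℝ) : caoPoly (n + 1) s = s ^ n - n * caoPoly n s := by
  have hterm : ∀ r ∈ range n,
      (-1 : ℝ) ^ (n + 1 - r - 1) * ((n + 1 - 1).factorial / r.factorial : ℝ) * s ^ r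
        = -(n * ((-1 : ℝ) ^ (n - r - 1) * ((n - 1).factorial / r.factorial : ℝ) * s ^ r)) := by
    intro r hr
    have hrn : r < n := mem_range.mp hr
    obtain ⟨k, rfl⟩ : ∃ k, n = k + 1 := ⟨n - 1, by omega⟩
    rw [show k + 1 + 1 - r - 1 = (k + 1 - r - 1) + 1 by omega, Nat.add_sub_cancel,
      Nat.add_sub_cancel, Nat.factorial_succ]
    push_cast
    ring
  have hlast : (-1 : ℝ) ^ (n + 1 - n - 1) * ((n + 1 - 1).factorial / n.factorial : ℝ) * s ^ n
      = s ^ n := by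
    simp [Nat.factorial_ne_zero]
  rw [caoPoly, sum_range_succ, sum_congr rfl hterm, sum_neg_distrib, hlast, caoPoly, mul_sum]
  ring

lemma hasDerivAt_caoPoly_mul_exp (n : ℕ) (s : ℝ) :
    HasDerivAt (fun s => caoPoly (n + 1) s * exp s) (s ^ n * exp s) s := by
  induction n with
  | zero => simpa [caoPoly] using hasDerivAt_exp s
  | succ n ih =>
    have hrec : (fun s => caoPoly (n + 1 + 1) s * exp s)
        = fun s => s ^ (n + 1) * exp s - (n + 1 : ℝ) * (caoPoly (n + 1) s * exp s) := by
      funext s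
      rw [caoPoly_succ]
      push_cast
      ring
    rw [hrec]
    refine (((hasDerivAt_pow (n + 1) s).mul (hasDerivAt_exp s)).sub
      (ih.const_mul (n + 1 : ℝ))).congr_deriv ?_
    push_cast
    ring

lemma exp_le_one_add_add_sq {s : ℝ} (hs : |s| ≤ 1) : exp s ≤ 1 + s + s ^ 2 := by
  have := (abs_le.mp (abs_exp_sub_one_sub_id_le hs)).2
  linarith

lemma one_sub_pow_le (m : ℕ) {w : ℝ} (hw : 0 ≤ w) (hw1 : w ≤ 1) (hmw : m * w ≤ 1) :
    (1 - w) ^ m ≤ 1 - m * w + (m * w) ^ 2 :=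
  calc (1 - w) ^ m ≤ exp (-w) ^ m := pow_le_pow_left₀ (by linarith) (one_sub_le_exp_neg w) m
    _ = exp (-(m * w)) := by rw [← exp_nat_mul]; ring_nf
    _ ≤ 1 - m * w + (m * w) ^ 2 := by
        have := exp_le_one_add_add_sq (s := -(m * w))
          (by rw [abs_neg, abs_of_nonneg (by positivity)]; exact hmw)
        linarith [neg_sq (m * w : ℝ)]

lemma pow_mul_abs_sub_le_abs_pow_succ_sub (n : ℕ) {u v : ℝ} (hu : 0 ≤ u) (hv : 0 ≤ v) :
    u ^ n * |v - u| ≤ |v ^ (n + 1) - u ^ (n + 1)| := by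
  rcases le_total u v with huv | hvu
  · have : u ^ n * v ≤ v ^ (n + 1) :=
      pow_succ v n ▸ mul_le_mul_of_nonneg_right (pow_le_pow_left₀ hu huv n) hv
    rw [abs_of_nonneg (sub_nonneg.mpr huv),
      abs_of_nonneg (sub_nonneg.mpr (pow_le_pow_left₀ hu huv _)), pow_succ u]
    linarith
  · have : v ^ (n + 1) ≤ u ^ n * v :=
      pow_succ v n ▸ mul_le_mul_of_nonneg_right (pow_le_pow_left₀ hv hvu n) hv
    rw [abs_of_nonpos (sub_nonpos.mpr hvu),
      abs_of_nonpos (sub_nonpos.mpr (pow_le_pow_left₀ hv hvu _)), pow_succ u]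
    linarith

lemma abs_taylor_approx_inverse_sub_le (n : ℕ) {x : ℝ} (hx : 0 ≤ x) (hx1 : x ≤ 1) :
    |(x - x ^ 2 / (n + 2)) ^ (n + 1) / (n + 1) + (x - x ^ 2 / (n + 2)) ^ (n + 2) / (n + 2)
      - x ^ (n + 1) / (n + 1)| ≤ x ^ (n + 3) := by
  set w := x / (n + 2) with hw
  have hw0 : 0 ≤ w := by positivity
  have hwx : (n + 2) * w = x := by rw [hw]; field_simp
  have hw1 : w ≤ x := by nlinarith
  have hE : (x - x ^ 2 / (n + 2)) ^ (n + 1) / (n + 1) + (x - x ^ 2 / (n + 2)) ^ (n + 2) / (n + 2)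
      - x ^ (n + 1) / (n + 1)
      = x ^ (n + 1) * (((1 - w) ^ (n + 1) - 1) / (n + 1) + w * (1 - w) ^ (n + 2)) := by
    have hxw : x - x ^ 2 / (n + 2) = x * (1 - w) := by rw [hw]; ring
    have hdiv : x ^ (n + 2) / (n + 2) = x ^ (n + 1) * w := by rw [hw, pow_succ]; field_simp
    rw [hxw, mul_pow, mul_pow, mul_div_right_comm _ _ (n + 2 : ℝ), hdiv]
    ring
  set A := (1 - w) ^ (n + 1)
  set C := (1 - w) ^ (n + 2)
  have hA : 1 - (n + 1) * w ≤ A := by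
    simpa [← sub_eq_add_neg] using one_add_mul_le_pow (a := -w) (by linarith) (n + 1)
  have hC : 1 - (n + 2) * w ≤ C := by
    simpa [← sub_eq_add_neg] using one_add_mul_le_pow (a := -w) (by linarith) (n + 2)
  have hA' : A ≤ 1 - (n + 1) * w + ((n + 1) * w) ^ 2 := by
    simpa using one_sub_pow_le (n + 1) hw0 (by linarith) (by push_cast; nlinarith)
  have hC' : C ≤ 1 := pow_le_one₀ (by linarith) (by linarith)
  rw [hE, abs_mul, abs_of_nonneg (by positivity), pow_add _ (n + 1) 2]
  gcongr
  have hA_div : -w ≤ (A - 1) / (n + 1) := by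
    rw [le_div_iff₀ (by positivity)]; linarith
  have hA_div' : (A - 1) / (n + 1) ≤ -w + (n + 1) * w ^ 2 := by
    rw [div_le_iff₀ (by positivity)]; linarith
  rw [abs_le]
  constructor <;> nlinarith

lemma le_of_hasDerivAt_le {f g f' g' : ℝ → ℝ} {a b : ℝ} (hab : a ≤ b)
    (hf : ∀ s, HasDerivAt f (f' s) s) (hg : ∀ s, HasDerivAt g (g' s) s)
    (ha : f a ≤ g a) (hfg' : ∀ s ∈ Set.Ico a b, f' s ≤ g' s) : f b ≤ g b :=
  image_le_of_deriv_right_le_deriv_boundary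
    (fun s _ => (hf s).continuousAt.continuousWithinAt) (fun s _ => (hf s).hasDerivWithinAt) ha
    (fun s _ => (hg s).continuousAt.continuousWithinAt) (fun s _ => (hg s).hasDerivWithinAt) hfg'
    (Set.right_mem_Icc.mpr hab)

lemma hasDerivAt_pow_succ_div (n : ℕ) (s : ℝ) :
    HasDerivAt (fun s : ℝ => s ^ (n + 1) / (n + 1)) (s ^ n) s := by
  refine ((hasDerivAt_pow (n + 1) s).div_const _).congr_deriv ?_
  push_cast
  field_simp

section
variable {n : ℕ} {G : ℝ → ℝ} (hG : ∀ s, HasDerivAt G (s ^ n * exp s) s)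
include hG

lemma pow_succ_sub_pow_succ_div_le {u v : ℝ} (hu : 0 ≤ u) (huv : u ≤ v) :
    (v ^ (n + 1) - u ^ (n + 1)) / (n + 1) ≤ G v - G u := by
  have key := le_of_hasDerivAt_le huv
    (fun s => ((hasDerivAt_pow_succ_div n s).add_const (G u - u ^ (n + 1) / (n + 1)))) hG
    (le_of_eq (by ring)) fun s hs =>
      le_mul_of_one_le_right (pow_nonneg (hu.trans hs.1) n) (one_le_exp (hu.trans hs.1))
  rw [sub_div]
  linarith

lemma abs_pow_succ_sub_le {u v : ℝ} (hu : 0 ≤ u) (hv : 0 ≤ v) :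
    |v ^ (n + 1) - u ^ (n + 1)| ≤ (n + 1) * |G v - G u| := by
  rcases le_total u v with huv | hvu
  · have := pow_succ_sub_pow_succ_div_le hG hu huv
    rw [div_le_iff₀' (by positivity)] at this
    rw [abs_of_nonneg (sub_nonneg.mpr (pow_le_pow_left₀ hu huv _))]
    exact this.trans (mul_le_mul_of_nonneg_left (le_abs_self _) (by positivity))
  · have := pow_succ_sub_pow_succ_div_le hG hv hvu
    rw [div_le_iff₀' (by positivity)] at this
    rw [abs_sub_comm, abs_sub_comm (G v),
      abs_of_nonneg (sub_nonneg.mpr (pow_le_pow_left₀ hv hvu _))]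
    exact this.trans (mul_le_mul_of_nonneg_left (le_abs_self _) (by positivity))

variable (hG0 : G 0 = 0)
include hG0

lemma abs_sub_taylor_le {s : ℝ} (hs : 0 ≤ s) (hs1 : s ≤ 1) :
    |G s - (s ^ (n + 1) / (n + 1) + s ^ (n + 2) / (n + 2))| ≤ s ^ (n + 3) := by
  have hP : ∀ u, HasDerivAt (fun u : ℝ => u ^ (n + 1) / (n + 1) + u ^ (n + 2) / (n + 2))
      (u ^ n * (1 + u)) u := fun u => by
    refine ((hasDerivAt_pow_succ_div n u).fun_add
      (((hasDerivAt_pow (n + 2) u).div_const (n + 2 : ℝ)))).congr_deriv ?_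
    rw [show n + 2 - 1 = n + 1 by omega]
    push_cast
    field_simp
    ring
  rw [abs_le]
  constructor
  · have := le_of_hasDerivAt_le hs hP hG (by simp [hG0]) fun u hu =>
      mul_le_mul_of_nonneg_left (by linarith [add_one_le_exp u]) (pow_nonneg hu.1 n)
    linarith [pow_nonneg hs (n + 3)]
  · have hR : ∀ u, HasDerivAt (fun u : ℝ => u ^ (n + 1) / (n + 1) + u ^ (n + 2) / (n + 2)
        + u ^ (n + 3)) (u ^ n * (1 + u) + (n + 3) * u ^ (n + 2)) u := fun u => by
      refine ((hP u).fun_add (hasDerivAt_pow (n + 3) u)).congr_deriv ?_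
      push_cast
      ring
    have := le_of_hasDerivAt_le hs hG hR (by simp [hG0]) fun u hu => by
      have hu1 : |u| ≤ 1 := abs_le.mpr ⟨by linarith [hu.1], by linarith [hu.2]⟩
      have hsq : u ^ n * u ^ 2 ≤ (n + 3) * u ^ (n + 2) := by
        rw [← pow_add]
        exact le_mul_of_one_le_left (pow_nonneg hu.1 _) (by linarith [n.cast_nonneg (α := ℝ)])
      nlinarith [mul_le_mul_of_nonneg_left (exp_le_one_add_add_sq hu1) (pow_nonneg hu.1 n)]
    linarith

lemma abs_sub_le_of_eq_pow_succ_div {x y : ℝ} (hx : 0 < x) (hx1 : x ≤ 1)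
    (hy : 0 ≤ y) (hGy : G y = x ^ (n + 1) / (n + 1)) :
    |y - (x - x ^ 2 / (n + 2))| ≤ 2 ^ (n + 1) * (n + 1) * x ^ 3 := by
  set ψ := x - x ^ 2 / (n + 2)
  have hψx : ψ ≤ x := sub_le_self _ (by positivity)
  have hxψ : x / 2 ≤ ψ := by
    have : x ^ 2 / (n + 2) ≤ x / 2 := by
      rw [div_le_div_iff₀ (by positivity) (by positivity)]
      nlinarith [n.cast_nonneg (α := ℝ)]
    linarith
  have hψ0 : 0 ≤ ψ := by linarith
  have hGψ : |G ψ - x ^ (n + 1) / (n + 1)| ≤ 2 * x ^ (n + 3) := by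
    have h1 := abs_sub_taylor_le hG hG0 hψ0 (hψx.trans hx1)
    have h2 := abs_taylor_approx_inverse_sub_le n hx.le hx1
    have h3 : ψ ^ (n + 3) ≤ x ^ (n + 3) := pow_le_pow_left₀ hψ0 hψx _
    calc |G ψ - x ^ (n + 1) / (n + 1)| ≤ |G ψ - (ψ ^ (n + 1) / (n + 1) + ψ ^ (n + 2) / (n + 2))|
          + |ψ ^ (n + 1) / (n + 1) + ψ ^ (n + 2) / (n + 2) - x ^ (n + 1) / (n + 1)| :=
          abs_sub_le _ _ _
      _ ≤ 2 * x ^ (n + 3) := by linarith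
  have key : (x / 2) ^ n * |y - ψ| ≤ (x / 2) ^ n * (2 ^ (n + 1) * (n + 1) * x ^ 3) :=
    calc (x / 2) ^ n * |y - ψ| ≤ ψ ^ n * |y - ψ| := by gcongr
      _ ≤ |y ^ (n + 1) - ψ ^ (n + 1)| := pow_mul_abs_sub_le_abs_pow_succ_sub n hψ0 hy
      _ ≤ (n + 1) * |G y - G ψ| := abs_pow_succ_sub_le hG hψ0 hy
      _ ≤ (n + 1) * (2 * x ^ (n + 3)) := by
          rw [hGy, abs_sub_comm]; gcongr
      _ = (x / 2) ^ n * (2 ^ (n + 1) * (n + 1) * x ^ 3) := by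
          rw [div_pow, pow_succ 2 n]
          field_simp
          ring
  exact le_of_mul_le_mul_left key (by positivity)

end

/-- For `a = 0`, as `t → −∞`, `φ(t) = e^t − (1/(n+1)) e^{2t} + O(e^{3t})`. -/
theorem stmt_6 (n : ℕ) (hn : 1 ≤ n)
    (F : ℝ → ℝ)
    (hF : ∀ x : ℝ, F x = ∑ r ∈ Finset.range n,
      (-1 : ℝ) ^ (n - r - 1) * ((Nat.factorial (n - 1) : ℝ) / (Nat.factorial r : ℝ)) * x ^ r)
    (φ : ℝ → ℝ) (hφpos : ∀ t, 0 < φ t)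
    (hφeq : ∀ t, F (φ t) * Real.exp (φ t) = Real.exp (n * t) / n + F 0) :
    (fun t => φ t - (Real.exp t - (1 / (n + 1)) * Real.exp (2 * t)))
      =O[atBot] (fun t => Real.exp (3 * t)) := by
  obtain ⟨m, rfl⟩ : ∃ m, n = m + 1 := ⟨n - 1, by omega⟩
  obtain rfl : F = caoPoly (m + 1) := funext hF
  set G : ℝ → ℝ := fun s => caoPoly (m + 1) s * exp s - caoPoly (m + 1) 0
  have hG : ∀ s, HasDerivAt G (s ^ m * exp s) s := fun s =>
    (hasDerivAt_caoPoly_mul_exp m s).sub_const _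
  have hGφ : ∀ t, G (φ t) = exp t ^ (m + 1) / (m + 1) := fun t => by
    simp only [G, hφeq, ← exp_nat_mul]
    push_cast
    ring
  refine isBigO_iff.mpr ⟨2 ^ (m + 1) * (m + 1), ?_⟩
  filter_upwards [eventually_le_atBot 0] with t ht
  have h := abs_sub_le_of_eq_pow_succ_div hG (by simp [G]) (exp_pos t) (exp_le_one_iff.mpr ht)
    (hφpos t).le (hGφ t)
  have h2 : exp (2 * t) = exp t ^ 2 := by simpa using exp_nat_mul t 2
  have h3 : exp (3 * t) = exp t ^ 3 := by simpa using exp_nat_mul t 3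
  rw [norm_eq_abs, norm_eq_abs, h2, h3, abs_of_pos (pow_pos (exp_pos t) 3)]
  convert h using 4
  push_cast
  ring
end

section
/- Let n ≥ 1, a ≥ 0, and let φ : ℝ → ℝ satisfy F(φ(t)) e^{φ(t)} = e^{nt}/n + F(a) e^a with φ(t) > a, where F(s) = ∑_{r=0}^{n-1} (-1)^{n-r-1} ((n-1)!/r!) s^r. Then as t → +∞, φ(t) = n t − (n−1) log t − n log n + O((log t)/t); in particular φ(t)/t → n as t → ∞. -/
open Real Finset Filter Asymptotics Topology

/-!
Taking logarithms, the defining equation becomes `φ + log F(φ) = log (e^{nt}/n + C)`.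
Since `F` is monic of degree `n - 1`, `log F(s) = (n - 1) log s + O(1/s)`, while the right-hand
side is `nt - log n + O(e^{-nt})`. The function `F(s) e^s` is bounded on compact sets, so
`φ → ∞`, and therefore `φ + (n - 1) log φ = nt - log n + O(1/t)`. As `log φ = o(φ)`, this
forces `φ ~ nt`; then `log φ = log (nt) + O(log t / t)`, and substituting gives the expansion.
-/

lemma isBigO_log_of_tendsto_one {α : Type*} {l : Filter α} {u : α → ℝ}
    (hu : Tendsto u l (𝓝 1)) : (fun x => log (u x)) =O[l] fun x => u x - 1 := by
  have h := (hasDerivAt_log one_ne_zero).isBigO_sub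
  simp only [log_one, sub_zero] at h
  exact h.comp_tendsto hu

lemma tendsto_atTop_of_continuous_comp {α : Type*} {l : Filter α} {φ : α → ℝ}
    {f : ℝ → ℝ} (hf : Continuous f) {a : ℝ} (ha : ∀ᶠ x in l, a ≤ φ x)
    (h : Tendsto (f ∘ φ) l atTop) : Tendsto φ l atTop := by
  refine tendsto_atTop.2 fun M => ?_
  obtain ⟨B, hB⟩ := (isCompact_Icc (a := a) (b := M)).bddAbove_image hf.continuousOn
  filter_upwards [ha, h.eventually_gt_atTop B] with x hax hBx
  by_contra! hxM
  exact (hB ⟨φ x, ⟨hax, hxM.le⟩, rfl⟩).not_gt hBx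

lemma isBigO_sum_range_mul_pow_div_pow (c : ℕ → ℝ) (m : ℕ) :
    (fun s : ℝ => (∑ r ∈ range m, c r * s ^ r) / s ^ m) =O[atTop] fun s => s⁻¹ := by
  simp only [Finset.sum_div]
  refine IsBigO.fun_sum fun r hr => IsBigO.of_bound |c r| ?_
  filter_upwards [eventually_ge_atTop 1] with s hs
  have hs0 : 0 < s := one_pos.trans_le hs
  have hpow : s ^ r * s ≤ s ^ m := by
    rw [← pow_succ]; exact pow_le_pow_right₀ hs (mem_range.1 hr)
  simp only [norm_div, norm_mul, norm_inv, norm_pow, Real.norm_of_nonneg hs0.le,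
    Real.norm_eq_abs, mul_div_assoc]
  gcongr
  rw [div_le_iff₀ (by positivity), inv_mul_eq_div, le_div_iff₀ hs0]
  exact hpow

lemma isBigO_log_pow_add_sum_sub_mul_log (c : ℕ → ℝ) (m : ℕ) :
    (fun s : ℝ => log (s ^ m + ∑ r ∈ range m, c r * s ^ r) - m * log s) =O[atTop]
      fun s => s⁻¹ := by
  set z : ℝ → ℝ := fun s => (∑ r ∈ range m, c r * s ^ r) / s ^ m
  have hz : z =O[atTop] fun s => s⁻¹ := isBigO_sum_range_mul_pow_div_pow c m
  have hz1 : Tendsto (fun s => 1 + z s) atTop (𝓝 1) := by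
    simpa using (hz.trans_tendsto tendsto_inv_atTop_zero).const_add 1
  refine IsBigO.trans ?_ hz
  refine ((isBigO_log_of_tendsto_one hz1).congr' ?_ (by simp)).trans (isBigO_refl _ _)
  filter_upwards [eventually_gt_atTop 0, hz1.eventually (lt_mem_nhds one_pos)] with s hs hzs
  have hsm : s ^ m ≠ 0 := by positivity
  rw [show s ^ m + ∑ r ∈ range m, c r * s ^ r = s ^ m * (1 + z s) by
    simp only [z]; field_simp]
  rw [log_mul hsm hzs.ne', log_pow]; ring

lemma isBigO_log_exp_mul_div_add_sub {n : ℝ} (hn : 0 < n) (c : ℝ) :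
    (fun t => log (exp (n * t) / n + c) - (n * t - log n)) =O[atTop] fun t => t⁻¹ := by
  set z : ℝ → ℝ := fun t => n * c * exp (-n * t)
  have hz : z =O[atTop] fun t => t⁻¹ := by
    refine ((isLittleO_exp_neg_mul_rpow_atTop hn (-1)).isBigO.const_mul_left (n * c)).trans
      (IsBigO.of_bound 1 ?_)
    filter_upwards [eventually_gt_atTop 0] with t ht
    simp [rpow_neg_one]
  have hz1 : Tendsto (fun t => 1 + z t) atTop (𝓝 1) := by
    simpa using (hz.trans_tendsto tendsto_inv_atTop_zero).const_add 1
  refine IsBigO.trans ?_ hz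
  refine ((isBigO_log_of_tendsto_one hz1).congr' ?_ (by simp)).trans (isBigO_refl _ _)
  filter_upwards [hz1.eventually (lt_mem_nhds one_pos)] with t hzt
  rw [show exp (n * t) / n + c = exp (n * t) / n * (1 + z t) by
    simp only [z]; rw [neg_mul, exp_neg]; field_simp]
  rw [log_mul (by positivity) hzt.ne', log_div (exp_pos _).ne' hn.ne', log_exp]; ring

lemma isBigO_one_log_atTop : (fun _ => (1 : ℝ)) =O[atTop] log :=
  (isLittleO_one_left_iff ℝ).2 (tendsto_norm_atTop_atTop.comp tendsto_log_atTop) |>.isBigO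

lemma isBigO_inv_log_div_atTop : (fun t : ℝ => t⁻¹) =O[atTop] fun t => log t / t := by
  refine IsBigO.of_bound 1 ?_
  filter_upwards [eventually_ge_atTop (exp 1)] with t ht
  have ht0 : 0 < t := (exp_pos 1).trans_le ht
  have hlog : 1 ≤ log t := by rwa [le_log_iff_exp_le ht0]
  rw [one_mul, norm_inv, Real.norm_of_nonneg ht0.le, norm_div, Real.norm_of_nonneg ht0.le,
    Real.norm_of_nonneg (zero_le_one.trans hlog), inv_eq_one_div]
  gcongr

lemma isEquivalent_mul_of_add_mul_log {φ : ℝ → ℝ} {m n : ℝ} (hn : n ≠ 0)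
    (hφ : Tendsto φ atTop atTop)
    (h : (fun t => φ t + m * log (φ t) - n * t) =o[atTop] id) :
    φ ~[atTop] fun t => n * t := by
  have hlog : (fun t => m * log (φ t)) =o[atTop] φ :=
    (isLittleO_log_id_atTop.comp_tendsto hφ).const_mul_left m
  have hlin : (fun t => φ t + m * log (φ t) - n * t) =o[atTop] fun t => n * t :=
    h.trans_isBigO ((isBigO_refl id atTop).const_mul_right' hn.isUnit)
  have h1 : (fun t => φ t + m * log (φ t)) ~[atTop] φ := by
    refine (hlog.add_isEquivalent IsEquivalent.refl).congr_left (.of_forall fun t => ?_)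
    simp only [Pi.add_apply]; ring
  have h2 : (fun t => φ t + m * log (φ t)) ~[atTop] fun t => n * t := by
    refine (hlin.add_isEquivalent IsEquivalent.refl).congr_left (.of_forall fun t => ?_)
    simp only [Pi.add_apply]; ring
  exact h1.symm.trans h2

lemma isBigO_div_mul_sub_one_of_add_mul_log {φ : ℝ → ℝ} {m n : ℝ} (hn : 0 < n)
    (hequiv : φ ~[atTop] fun t => n * t)
    (h : Tendsto (fun t => φ t + m * log (φ t) - (n * t - log n)) atTop (𝓝 0)) :
    (fun t => φ t / (n * t) - 1) =O[atTop] fun t => log t / t := by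
  have hnt : ∀ᶠ t in atTop, n * t ≠ 0 := by
    filter_upwards [eventually_gt_atTop 0] with t ht
    positivity
  have hy : Tendsto (fun t => φ t / (n * t)) atTop (𝓝 1) :=
    (isEquivalent_iff_tendsto_one hnt).1 hequiv
  have hlogy : Tendsto (fun t => log (φ t / (n * t))) atTop (𝓝 0) := by
    simpa using hy.log one_ne_zero
  have hφpos : ∀ᶠ t in atTop, 0 < φ t :=
    (hequiv.symm.tendsto_atTop (tendsto_id.const_mul_atTop hn)).eventually_gt_atTop 0
  have hdiff : (fun t => φ t - n * t) =O[atTop] log := by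
    have e : (fun t => φ t - n * t) =ᶠ[atTop] fun t =>
        (φ t + m * log (φ t) - (n * t - log n)) - m * log (φ t / (n * t))
          - (m + 1) * log n - m * log t := by
      filter_upwards [hφpos, eventually_gt_atTop 0] with t hφ ht
      rw [log_div hφ.ne' (by positivity), log_mul hn.ne' ht.ne']; ring
    refine e.trans_isBigO (((IsBigO.sub ?_ ?_).sub ?_).sub ?_)
    · exact (h.isBigO_one ℝ).trans isBigO_one_log_atTop
    · exact ((hlogy.isBigO_one ℝ).trans isBigO_one_log_atTop).const_mul_left m
    · exact (isBigO_const_one ℝ _ atTop).trans isBigO_one_log_atTop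
    · exact (isBigO_refl _ _).const_mul_left m
  have e : (fun t => φ t / (n * t) - 1) =ᶠ[atTop]
      fun t => n⁻¹ * ((φ t - n * t) * t⁻¹) := by
    filter_upwards [eventually_gt_atTop 0] with t ht
    field_simp
  exact e.trans_isBigO ((hdiff.mul (isBigO_refl _ _)).const_mul_left _)

lemma isBigO_sub_of_add_mul_log {φ : ℝ → ℝ} {m n : ℝ} (hn : 0 < n)
    (hequiv : φ ~[atTop] fun t => n * t)
    (h : (fun t => φ t + m * log (φ t) - (n * t - log n)) =O[atTop] fun t => t⁻¹) :
    (fun t => φ t - (n * t - m * log t - (m + 1) * log n)) =O[atTop] fun t => log t / t := by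
  have hy := isBigO_div_mul_sub_one_of_add_mul_log hn hequiv
    (h.trans_tendsto tendsto_inv_atTop_zero)
  have hy1 : Tendsto (fun t => φ t / (n * t)) atTop (𝓝 1) := by
    simpa using (hy.trans_tendsto isLittleO_log_id_atTop.tendsto_div_nhds_zero).const_add 1
  have hφpos : ∀ᶠ t in atTop, 0 < φ t :=
    (hequiv.symm.tendsto_atTop (tendsto_id.const_mul_atTop hn)).eventually_gt_atTop 0
  have e : (fun t => φ t - (n * t - m * log t - (m + 1) * log n)) =ᶠ[atTop] fun t =>
      (φ t + m * log (φ t) - (n * t - log n)) - m * log (φ t / (n * t)) := by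
    filter_upwards [hφpos, eventually_gt_atTop 0] with t hφ ht
    rw [log_div hφ.ne' (by positivity), log_mul hn.ne' ht.ne']; ring
  exact e.trans_isBigO ((h.trans isBigO_inv_log_div_atTop).sub
    (((isBigO_log_of_tendsto_one hy1).trans hy).const_mul_left m))

lemma isEquivalent_and_isBigO_of_add_mul_log_add_eq {φ g h : ℝ → ℝ} {m n : ℝ} (hn : 0 < n)
    (hφ : Tendsto φ atTop atTop) (hg : g =O[atTop] fun s => s⁻¹)
    (hh : h =O[atTop] fun t => t⁻¹)
    (heq : ∀ᶠ t in atTop, φ t + m * log (φ t) + g (φ t) = n * t - log n + h t) :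
    (φ ~[atTop] fun t => n * t) ∧
      (fun t => φ t - (n * t - m * log t - (m + 1) * log n)) =O[atTop] fun t => log t / t := by
  set ψ : ℝ → ℝ := fun t => φ t + m * log (φ t) - (n * t - log n)
  have hψ : ψ =ᶠ[atTop] fun t => h t - g (φ t) := by
    filter_upwards [heq] with t ht
    simp only [ψ]; linarith
  have hψ0 : Tendsto ψ atTop (𝓝 0) := by
    simpa using ((hh.trans_tendsto tendsto_inv_atTop_zero).sub
      ((hg.comp_tendsto hφ).trans_tendsto (tendsto_inv_atTop_zero.comp hφ))).congr' hψ.symm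
  have hequiv : φ ~[atTop] fun t => n * t := by
    refine isEquivalent_mul_of_add_mul_log hn.ne' hφ (m := m) ?_
    refine (((hψ0.sub_const (log n)).isBigO_one ℝ).trans_isLittleO
      (isLittleO_const_id_atTop 1)).congr_left fun t => ?_
    simp only [ψ]; ring
  have hinv : (fun t => (φ t)⁻¹) =O[atTop] fun t => t⁻¹ :=
    hequiv.inv.isBigO.trans <| ((isBigO_refl _ _).const_mul_left n⁻¹).congr_left
      fun t => by simp [mul_comm]
  have hψO : ψ =O[atTop] fun t => t⁻¹ :=
    hψ.trans_isBigO (hh.sub ((hg.comp_tendsto hφ).trans hinv))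
  exact ⟨hequiv, isBigO_sub_of_add_mul_log hn hequiv hψO⟩

theorem stmt_7_general (n : ℕ) (hn : 1 ≤ n) (a : ℝ)
    (F : ℝ → ℝ)
    (hF : ∀ x : ℝ, F x = ∑ r ∈ Finset.range n,
      (-1 : ℝ) ^ (n - r - 1) * ((Nat.factorial (n - 1) : ℝ) / (Nat.factorial r : ℝ)) * x ^ r)
    (φ : ℝ → ℝ) (hφa : ∀ t, a < φ t)
    (hφeq : ∀ t, F (φ t) * Real.exp (φ t) = Real.exp (n * t) / n + F a * Real.exp a) :
    (fun t => φ t - ((n : ℝ) * t - ((n : ℝ) - 1) * Real.log t - (n : ℝ) * Real.log n))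
      =O[atTop] (fun t => Real.log t / t) ∧
    Filter.Tendsto (fun t => φ t / t) atTop (nhds (n : ℝ)) := by
  obtain ⟨m, rfl⟩ : ∃ m, n = m + 1 := ⟨n - 1, by omega⟩
  have hN : (0 : ℝ) < (m + 1 : ℕ) := by positivity
  set c : ℕ → ℝ := fun r =>
    (-1 : ℝ) ^ (m + 1 - r - 1) * ((m + 1 - 1).factorial / r.factorial)
  have hFpoly : ∀ s, F s = s ^ m + ∑ r ∈ range m, c r * s ^ r := by
    intro s; rw [hF, sum_range_succ, add_comm]; simp [c, Nat.factorial_ne_zero]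
  have hE : Tendsto (fun t => exp ((m + 1 : ℕ) * t) / (m + 1 : ℕ) + F a * exp a) atTop atTop :=
    tendsto_atTop_add_const_right _ _ <|
      (tendsto_exp_atTop.comp (tendsto_id.const_mul_atTop hN)).atTop_div_const hN
  have hφtop : Tendsto φ atTop atTop :=
    tendsto_atTop_of_continuous_comp (f := fun s => F s * exp s)
      ((funext hF ▸ by fun_prop : Continuous F).mul continuous_exp)
      (.of_forall fun t => (hφa t).le) (by simpa [Function.comp_def, hφeq] using hE)
  have hlog : ∀ᶠ t in atTop, φ t + m * log (φ t) + (log (F (φ t)) - m * log (φ t)) =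
      (m + 1 : ℕ) * t - log (m + 1 : ℕ) +
        (log (exp ((m + 1 : ℕ) * t) / (m + 1 : ℕ) + F a * exp a)
          - ((m + 1 : ℕ) * t - log (m + 1 : ℕ))) := by
    filter_upwards [hE.eventually_gt_atTop 0] with t ht
    rw [← hφeq] at ht ⊢
    rw [log_mul (pos_of_mul_pos_left ht (exp_pos _).le).ne' (exp_pos _).ne', log_exp]
    ring
  have hG : (fun s => log (F s) - m * log s) =O[atTop] fun s => s⁻¹ := by
    simpa only [hFpoly] using isBigO_log_pow_add_sum_sub_mul_log c m
  obtain ⟨hequiv, hO⟩ := isEquivalent_and_isBigO_of_add_mul_log_add_eq hN hφtop hG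
    (isBigO_log_exp_mul_div_add_sub hN (F a * exp a)) hlog
  refine ⟨by simpa using hO, ?_⟩
  refine (hequiv.div IsEquivalent.refl).symm.tendsto_nhds (tendsto_const_nhds.congr' ?_)
  filter_upwards [eventually_ne_atTop 0] with t ht
  simp [ht]

/-- As `t → +∞`, `φ(t) = n t − (n−1) log t − n log n + O((log t)/t)`;
in particular `φ(t)/t → n`. -/
theorem stmt_7 (n : ℕ) (hn : 1 ≤ n) (a : ℝ) (ha : 0 ≤ a)
    (F : ℝ → ℝ)
    (hF : ∀ x : ℝ, F x = ∑ r ∈ Finset.range n,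
      (-1 : ℝ) ^ (n - r - 1) * ((Nat.factorial (n - 1) : ℝ) / (Nat.factorial r : ℝ)) * x ^ r)
    (φ : ℝ → ℝ) (hφa : ∀ t, a < φ t)
    (hφeq : ∀ t, F (φ t) * Real.exp (φ t) = Real.exp (n * t) / n + F a * Real.exp a) :
    (fun t => φ t - ((n : ℝ) * t - ((n : ℝ) - 1) * Real.log t - (n : ℝ) * Real.log n))
      =O[atTop] (fun t => Real.log t / t) ∧
    Filter.Tendsto (fun t => φ t / t) atTop (nhds (n : ℝ)) :=
  stmt_7_general n hn a F hF φ hφa hφeq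
end

section
/- Let (E, ‖·‖_E) and (F, ‖·‖_F) be Banach spaces and T : E → F a smooth map. Write Q := T − T(0) − DT|₀. Suppose there exist positive constants q, r₀, c such that: (1) ‖Q(x) − Q(y)‖ ≤ q ‖x − y‖ (‖x‖ + ‖y‖) for all x, y in the open ball B_E(0, r₀); (2) DT|₀ is a Banach-space isomorphism with ‖(DT|₀)^{-1}‖ ≤ c; (3) ‖T(0)‖ < (1/(2c)) min(r₀, 1/(2qc)). Then the equation T(x) = 0 admits a unique solution x in B_E(0, min(r₀, 1/(2qc))). -/
open Metric

/-- Quantitative inverse function theorem: if `T : E → F` is smooth between Banach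
spaces, `Q = T − T(0) − DT|₀` satisfies a quadratic estimate on `B(0,r₀)`, `DT|₀` is
an isomorphism with inverse bounded by `c`, and `‖T 0‖ < (1/(2c)) min(r₀, 1/(2qc))`,
then `T x = 0` has a unique solution in `B(0, min(r₀, 1/(2qc)))`. -/
theorem stmt_10
    {E F : Type*} [NormedAddCommGroup E] [NormedSpace ℝ E] [CompleteSpace E]
    [NormedAddCommGroup F] [NormedSpace ℝ F] [CompleteSpace F]
    (T : E → F) (hT : ContDiff ℝ (⊤ : ℕ∞) T)
    (D : E ≃L[ℝ] F) (hD : HasFDerivAt T (D : E →L[ℝ] F) 0)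
    (q r₀ c : ℝ) (hq : 0 < q) (hr₀ : 0 < r₀) (hc : 0 < c)
    (hcbound : ‖(D.symm : F →L[ℝ] E)‖ ≤ c)
    (hQ : ∀ x ∈ Metric.ball (0 : E) r₀, ∀ y ∈ Metric.ball (0 : E) r₀,
      ‖(T x - T 0 - D x) - (T y - T 0 - D y)‖ ≤ q * ‖x - y‖ * (‖x‖ + ‖y‖))
    (hT0 : ‖T 0‖ < (1 / (2 * c)) * min r₀ (1 / (2 * q * c))) :
    ∃! x : E, x ∈ Metric.ball (0 : E) (min r₀ (1 / (2 * q * c))) ∧ T x = 0 := by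
  set r : ℝ := min r₀ (1 / (2 * q * c)) with hrdef
  have hr : 0 < r := lt_min hr₀ (by positivity)
  have hrle : r * (2 * q * c) ≤ 1 := by
    have h := min_le_right r₀ (1 / (2 * q * c))
    rwa [le_div_iff₀ (by positivity : (0:ℝ) < 2 * q * c)] at h
  set ρ : ℝ := 2 * c * ‖T 0‖ with hρdef
  have hρ0 : 0 ≤ ρ := by positivity
  have hρr : ρ < r := by
    have h2c : (0:ℝ) < 2 * c := by positivity
    calc ρ = (2 * c) * ‖T 0‖ := rfl
      _ < (2 * c) * ((1 / (2 * c)) * r) := (mul_lt_mul_iff_right₀ h2c).mpr hT0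
      _ = r := by field_simp
  have hK1 : 2 * q * c * ρ < 1 := by
    nlinarith [mul_pos (show (0:ℝ) < 2 * q * c by positivity) (sub_pos.mpr hρr), hrle]
  set Φ : E → E := fun x => x - D.symm (T x) with hΦdef
  -- key estimate
  have key : ∀ x ∈ Metric.ball (0 : E) r₀, ∀ y ∈ Metric.ball (0 : E) r₀,
      ‖Φ x - Φ y‖ ≤ c * (q * ‖x - y‖ * (‖x‖ + ‖y‖)) := by
    intro x hx y hy
    have h1 : Φ x - Φ y = D.symm (-((T x - T 0 - D x) - (T y - T 0 - D y))) := by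
      simp only [hΦdef, map_neg, map_sub, ContinuousLinearEquiv.symm_apply_apply]
      abel
    calc ‖Φ x - Φ y‖ = ‖(D.symm : F →L[ℝ] E) (-((T x - T 0 - D x) - (T y - T 0 - D y)))‖ := by
          rw [h1]; rfl
      _ ≤ ‖(D.symm : F →L[ℝ] E)‖ * ‖-((T x - T 0 - D x) - (T y - T 0 - D y))‖ :=
          (D.symm : F →L[ℝ] E).le_opNorm _
      _ = ‖(D.symm : F →L[ℝ] E)‖ * ‖(T x - T 0 - D x) - (T y - T 0 - D y)‖ := by rw [norm_neg]
      _ ≤ c * (q * ‖x - y‖ * (‖x‖ + ‖y‖)) := by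
          apply mul_le_mul hcbound (hQ x hx y hy) (norm_nonneg _) hc.le
  have hsub : ∀ z : E, z ∈ Metric.closedBall (0 : E) ρ → z ∈ Metric.ball (0 : E) r₀ := by
    intro z hz
    rw [Metric.mem_closedBall, dist_zero_right] at hz
    rw [Metric.mem_ball, dist_zero_right]
    calc ‖z‖ ≤ ρ := hz
      _ < r := hρr
      _ ≤ r₀ := min_le_left _ _
  have hΦ0 : ‖Φ 0‖ ≤ ρ / 2 := by
    have : Φ 0 = -(D.symm (T 0)) := by simp [hΦdef]
    rw [this, norm_neg]
    calc ‖D.symm (T 0)‖ = ‖(D.symm : F →L[ℝ] E) (T 0)‖ := rfl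
      _ ≤ ‖(D.symm : F →L[ℝ] E)‖ * ‖T 0‖ := (D.symm : F →L[ℝ] E).le_opNorm _
      _ ≤ c * ‖T 0‖ := mul_le_mul_of_nonneg_right hcbound (norm_nonneg _)
      _ = ρ / 2 := by rw [hρdef]; ring
  have h0mem : (0 : E) ∈ Metric.closedBall (0 : E) ρ := Metric.mem_closedBall_self hρ0
  have hmaps : Set.MapsTo Φ (Metric.closedBall (0 : E) ρ) (Metric.closedBall (0 : E) ρ) := by
    intro x hx
    have hxρ : ‖x‖ ≤ ρ := by rwa [Metric.mem_closedBall, dist_zero_right] at hx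
    have h1 := key x (hsub x hx) 0 (hsub 0 h0mem)
    simp only [sub_zero, norm_zero, add_zero] at h1
    rw [Metric.mem_closedBall, dist_zero_right]
    have h2 : ‖Φ x‖ ≤ ‖Φ x - Φ 0‖ + ‖Φ 0‖ := by simpa using norm_add_le (Φ x - Φ 0) (Φ 0)
    nlinarith [norm_nonneg x, mul_nonneg (mul_nonneg hq.le hc.le) (sub_nonneg.mpr hxρ)]
  set K : NNReal := ⟨2 * q * c * ρ, by positivity⟩ with hKdef
  have hKcoe : (K : ℝ) = 2 * q * c * ρ := rfl
  have hcontr : ContractingWith K (hmaps.restrict Φ _ _) := by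
    constructor
    · exact_mod_cast hK1
    · apply LipschitzWith.of_dist_le_mul
      rintro ⟨x, hx⟩ ⟨y, hy⟩
      have hxρ : ‖x‖ ≤ ρ := by rwa [Metric.mem_closedBall, dist_zero_right] at hx
      have hyρ : ‖y‖ ≤ ρ := by rwa [Metric.mem_closedBall, dist_zero_right] at hy
      have h1 := key x (hsub x hx) y (hsub y hy)
      simp only [Subtype.dist_eq, Set.MapsTo.val_restrict_apply]
      rw [dist_eq_norm, dist_eq_norm, hKcoe]
      nlinarith [norm_nonneg (x - y), mul_nonneg (mul_nonneg hq.le hc.le) (norm_nonneg (x - y))]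
  obtain ⟨a, has, hfix, -, -⟩ := hcontr.exists_fixedPoint'
    (Metric.isClosed_closedBall.isComplete) hmaps h0mem (edist_ne_top _ _)
  have haρ : ‖a‖ ≤ ρ := by rwa [Metric.mem_closedBall, dist_zero_right] at has
  have hTa : T a = 0 := by
    have h1 : a - D.symm (T a) = a := hfix
    have h2 : D.symm (T a) = 0 := by
      have := sub_eq_self.mp h1
      exact this
    have := congrArg D h2
    simpa using this
  have hamem : a ∈ Metric.ball (0 : E) r := by
    rw [Metric.mem_ball, dist_zero_right]; exact lt_of_le_of_lt haρ hρr
  refine ⟨a, ⟨hamem, hTa⟩, ?_⟩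
  rintro y ⟨hymem, hTy⟩
  have hyr : ‖y‖ < r := by rwa [Metric.mem_ball, dist_zero_right] at hymem
  have har : ‖a‖ < r := lt_of_le_of_lt haρ hρr
  have hyr₀ : y ∈ Metric.ball (0 : E) r₀ := by
    rw [Metric.mem_ball, dist_zero_right]; exact lt_of_lt_of_le hyr (min_le_left _ _)
  have har₀ : a ∈ Metric.ball (0 : E) r₀ := by
    rw [Metric.mem_ball, dist_zero_right]; exact lt_of_lt_of_le har (min_le_left _ _)
  have h1 := key y hyr₀ a har₀
  have hΦy : Φ y = y := by simp [hΦdef, hTy]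
  have hΦa : Φ a = a := by simp [hΦdef, hTa]
  rw [hΦy, hΦa] at h1
  have hd0 : ‖y - a‖ = 0 := by
    by_contra h
    have hd : 0 < ‖y - a‖ := lt_of_le_of_ne (norm_nonneg _) (Ne.symm h)
    nlinarith [mul_pos (mul_pos hq hc) hd, hrle, norm_nonneg y, norm_nonneg a]
  have := norm_sub_eq_zero_iff.mp hd0
  exact this
end

section
/- Let n ≥ 1 and let φ : ℝ → ℝ satisfy F(φ(t)) e^{φ(t)} = e^{nt}/n + F(0) with φ(t) > 0, where F(s) = ∑_{r=0}^{n-1} (-1)^{n-r-1} ((n-1)!/r!) s^r. Then φ'(t) = n − (n−1)/t + O((log t)/t²) as t → +∞; in particular φ'(t) → n as t → ∞. -/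
/-!
Since `F' + F = x^(n-1)`, differentiating `F(φ) e^φ = e^(nt)/n + F(0)` gives
`φ^(n-1) e^φ φ' = e^(nt)`. As `F(x) ~ x^(n-1)`, the equation forces `φ → ∞` and
`φ^(n-1) e^φ ~ e^(nt)/n`; taking logarithms, `φ + (n-1) log φ = nt - log n + o(1)`, whence
`φ = nt + O(log t)`. Substituting `e^(nt) = n (F(φ) e^φ - F(0))`,
`φ' - n + (n-1)/t = n (F(φ)/φ^(n-1) - 1 + (n-1)/φ) + (n-1)(φ - nt)/(tφ)
  - n F(0)/(φ^(n-1) e^φ)`, and the three terms are `O(1/φ²)`, `O(log t / t²)` and `O(e^(-nt))`.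
-/

open Real Finset Filter Asymptotics
open scoped Topology

noncomputable def solitonPoly (n : ℕ) (x : ℝ) : ℝ :=
  ∑ r ∈ range n, (-1 : ℝ) ^ (n - r - 1) * ((n - 1).factorial / r.factorial : ℝ) * x ^ r

@[simp]
theorem solitonPoly_zero : solitonPoly 0 = 0 := by
  ext x; simp [solitonPoly]

theorem solitonPoly_succ (m : ℕ) (x : ℝ) :
    solitonPoly (m + 1) x = x ^ m - m * solitonPoly m x := by
  have hcoeff : ∀ r ∈ range m,
      (-1 : ℝ) ^ (m + 1 - r - 1) * ((m + 1 - 1).factorial / r.factorial : ℝ)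
        = -(m * ((-1 : ℝ) ^ (m - r - 1) * ((m - 1).factorial / r.factorial : ℝ))) := by
    intro r hr
    obtain ⟨k, rfl⟩ := Nat.exists_eq_add_of_lt (mem_range.1 hr)
    rw [show r + k + 1 + 1 - r - 1 = k + 1 by omega, show r + k + 1 - r - 1 = k by omega,
      Nat.add_sub_cancel, Nat.add_sub_cancel, Nat.factorial_succ]
    push_cast
    ring
  have htop : (-1 : ℝ) ^ (m + 1 - m - 1) * ((m + 1 - 1).factorial / m.factorial : ℝ) = 1 := by
    simp [Nat.factorial_ne_zero]
  rw [solitonPoly, sum_range_succ, htop, sum_congr rfl fun r hr => by rw [hcoeff r hr],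
    solitonPoly, mul_sum]
  simp only [neg_mul, sum_neg_distrib, mul_assoc]
  ring

theorem hasDerivAt_solitonPoly_mul_exp (m : ℕ) (x : ℝ) :
    HasDerivAt (fun y => solitonPoly (m + 1) y * exp y) (x ^ m * exp x) x := by
  induction m with
  | zero => simpa [solitonPoly_succ] using hasDerivAt_exp x
  | succ k ih =>
    have hfun : (fun y => solitonPoly (k + 2) y * exp y)
        = fun y => y ^ (k + 1) * exp y
          - ((k + 1 : ℕ) : ℝ) * (solitonPoly (k + 1) y * exp y) := by
      ext y; rw [solitonPoly_succ]; ring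
    rw [hfun]
    refine (((hasDerivAt_pow (k + 1) x).mul (hasDerivAt_exp x)).sub
      (ih.const_mul ((k + 1 : ℕ) : ℝ))).congr_deriv ?_
    rw [Nat.add_sub_cancel]; ring

theorem isBigO_solitonPoly_mul_self (k : ℕ) :
    (fun x => solitonPoly k x * x) =O[atTop] (· ^ k) := by
  induction k with
  | zero => simp only [solitonPoly_zero, Pi.zero_apply, zero_mul]; exact isBigO_zero _ _
  | succ k ih =>
    simp_rw [solitonPoly_succ, sub_mul, mul_assoc, ← pow_succ]
    exact (isBigO_refl _ _).sub
      ((ih.trans (isLittleO_pow_pow_atTop_of_lt k.lt_succ_self).isBigO).const_mul_left _)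

theorem isBigO_solitonPoly_div_pow_sub (m : ℕ) :
    (fun x => solitonPoly (m + 1) x / x ^ m - (1 - m / x)) =O[atTop] fun x => (x ^ 2)⁻¹ := by
  cases m with
  | zero => simpa [solitonPoly_succ] using isBigO_zero (fun x : ℝ => (x ^ 2)⁻¹) atTop
  | succ k =>
    have hB : (fun x => ((k + 1) * k : ℝ) * (solitonPoly k x * x * (x ^ (k + 2))⁻¹))
        =O[atTop] fun x => x ^ k * (x ^ (k + 2))⁻¹ :=
      ((isBigO_solitonPoly_mul_self k).mul (isBigO_refl _ _)).const_mul_left _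
    refine hB.congr' ?_ ?_ <;> filter_upwards [eventually_gt_atTop 0] with x hx
    · rw [solitonPoly_succ, solitonPoly_succ]
      field_simp
      push_cast
      ring
    · field_simp
      ring

theorem isEquivalent_solitonPoly (m : ℕ) : solitonPoly (m + 1) ~[atTop] (· ^ m) := by
  refine isEquivalent_of_tendsto_one ?_
  have hsub := (isBigO_solitonPoly_div_pow_sub m).trans_tendsto
    (tendsto_inv_atTop_zero.comp (tendsto_pow_atTop (α := ℝ) two_ne_zero))
  have hmain : Tendsto (fun x : ℝ => 1 - m / x) atTop (𝓝 1) := by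
    simpa using (tendsto_const_nhds (x := (1 : ℝ))).sub
      ((tendsto_const_nhds (x := (m : ℝ))).div_atTop tendsto_id)
  simpa [Pi.div_def] using hsub.add hmain

theorem tendsto_exp_mul_div_atTop (m : ℕ) :
    Tendsto (fun t : ℝ => exp ((m + 1) * t) / (m + 1)) atTop atTop :=
  (tendsto_exp_atTop.comp (tendsto_id.const_mul_atTop (by positivity))).atTop_div_const
    (by positivity)

theorem isBigO_inv_sq_of_isEquivalent {u : ℝ → ℝ} {c : ℝ}
    (hu : u ~[atTop] fun t => c * t ^ 2) :
    (fun t => (u t)⁻¹) =O[atTop] fun t => (t ^ 2)⁻¹ := by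
  refine hu.inv.isBigO.trans ?_
  simp only [Pi.inv_def, mul_inv]
  exact (isBigO_refl _ _).const_mul_left c⁻¹

theorem isBigO_inv_sq_log_div_sq :
    (fun t : ℝ => (t ^ 2)⁻¹) =O[atTop] fun t => log t / t ^ 2 := by
  simpa only [one_mul, div_eq_mul_inv] using
    (isLittleO_const_log_atTop (c := 1)).isBigO.mul
      (isBigO_refl (fun t : ℝ => (t ^ 2)⁻¹) atTop)

theorem tendsto_log_div_sq_atTop : Tendsto (fun t => log t / t ^ 2) atTop (𝓝 0) := by
  simpa using (isLittleO_log_id_atTop.tendsto_div_nhds_zero.mul tendsto_inv_atTop_zero).congr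
    fun t => show log t / id t * t⁻¹ = log t / t ^ 2 by simp only [id]; ring

/-- The hypotheses of the theorem for `n = m + 1` and `F = solitonPoly n`; writing `n = m + 1`
avoids the truncated subtraction in the exponent `n - 1`. -/
structure IsSolitonProfile (m : ℕ) (φ : ℝ → ℝ) : Prop where
  pos : ∀ t, 0 < φ t
  eq : ∀ t, solitonPoly (m + 1) (φ t) * exp (φ t)
    = exp ((m + 1) * t) / (m + 1) + solitonPoly (m + 1) 0

namespace IsSolitonProfile

variable {m : ℕ} {φ : ℝ → ℝ}

theorem tendsto_atTop (h : IsSolitonProfile m φ) : Tendsto φ atTop atTop := by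
  have hG : Continuous fun x => solitonPoly (m + 1) x * exp x :=
    Differentiable.continuous fun x => (hasDerivAt_solitonPoly_mul_exp m x).differentiableAt
  have hGφ : Tendsto (fun t => solitonPoly (m + 1) (φ t) * exp (φ t)) atTop atTop := by
    simpa only [h.eq] using tendsto_atTop_add_const_right _ _ (tendsto_exp_mul_div_atTop m)
  refine Filter.tendsto_atTop.2 fun b => ?_
  obtain ⟨K, hK⟩ := (isCompact_Icc (a := 0) (b := b)).bddAbove_image hG.continuousOn
  filter_upwards [hGφ.eventually_gt_atTop K] with t ht
  by_contra! hb
  exact ht.not_ge (hK ⟨φ t, ⟨(h.pos t).le, hb.le⟩, rfl⟩)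

theorem isEquivalent_pow_mul_exp (h : IsSolitonProfile m φ) :
    (fun t => φ t ^ m * exp (φ t)) ~[atTop] fun t => exp ((m + 1) * t) / (m + 1) := by
  have hpoly : (fun t => solitonPoly (m + 1) (φ t)) ~[atTop] fun t => φ t ^ m :=
    (isEquivalent_solitonPoly m).comp_tendsto h.tendsto_atTop
  have hconst : (fun _ => solitonPoly (m + 1) 0) =o[atTop]
      fun t : ℝ => exp ((m + 1) * t) / (m + 1) :=
    isLittleO_const_left.2 (Or.inr (tendsto_norm_atTop_atTop.comp (tendsto_exp_mul_div_atTop m)))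
  calc (fun t => φ t ^ m * exp (φ t))
      ~[atTop] fun t => solitonPoly (m + 1) (φ t) * exp (φ t) := hpoly.symm.mul IsEquivalent.refl
    _ = (fun t => exp ((m + 1) * t) / (m + 1)) + fun _ => solitonPoly (m + 1) 0 := funext h.eq
    _ ~[atTop] _ := IsEquivalent.refl.add_isLittleO hconst

theorem tendsto_add_log_sub (h : IsSolitonProfile m φ) :
    Tendsto (fun t => φ t + m * log (φ t) + log (m + 1) - (m + 1) * t) atTop (𝓝 0) := by
  have hratio := (isEquivalent_iff_tendsto_one
    (Eventually.of_forall fun t => by positivity)).1 h.isEquivalent_pow_mul_exp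
  have hlog := hratio.log one_ne_zero
  rw [log_one] at hlog
  refine hlog.congr fun t => ?_
  have := h.pos t
  simp only [Pi.div_apply]
  rw [log_div (by positivity) (by positivity), log_mul (by positivity) (exp_pos _).ne', log_pow,
    log_exp, log_div (exp_pos _).ne' (by positivity), log_exp]
  ring

theorem isBigO_log_comp (h : IsSolitonProfile m φ) : (fun t => log (φ t)) =O[atTop] log := by
  refine IsBigO.of_bound 2 ?_
  filter_upwards [h.tendsto_add_log_sub.eventually (eventually_lt_nhds one_pos),
    h.tendsto_atTop.eventually_ge_atTop 1, eventually_ge_atTop ((m : ℝ) + 2)] with t hg hφ ht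
  have hlogφ : 0 ≤ log (φ t) := log_nonneg hφ
  have hlogm : 0 ≤ log ((m : ℝ) + 1) := log_nonneg (by simp)
  -- `φ ≤ φ + m log φ < (m + 1) t + 1 - log (m + 1) ≤ t ^ 2`
  have hφt : φ t ≤ t ^ 2 := by nlinarith
  rw [norm_of_nonneg hlogφ, norm_of_nonneg (log_nonneg (by linarith))]
  calc log (φ t) ≤ log (t ^ 2) := log_le_log (h.pos t) hφt
    _ = 2 * log t := by rw [log_pow]; push_cast; ring

theorem isBigO_sub_mul (h : IsSolitonProfile m φ) :
    (fun t => φ t - (m + 1) * t) =O[atTop] log := by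
  have hg := (h.tendsto_add_log_sub.isBigO_one ℝ).trans isLittleO_const_log_atTop.isBigO
  have hlog := h.isBigO_log_comp.const_mul_left (m : ℝ)
  have hc : (fun _ => log ((m : ℝ) + 1)) =O[atTop] log := isLittleO_const_log_atTop.isBigO
  refine ((hg.sub hlog).sub hc).congr_left fun t => ?_
  ring

theorem isEquivalent_mul (h : IsSolitonProfile m φ) : φ ~[atTop] fun t => (m + 1) * t :=
  (h.isBigO_sub_mul.trans_isLittleO isLittleO_log_id_atTop).trans_isBigO
    ((isBigO_refl _ _).const_mul_right (by positivity))

theorem isEquivalent_sq (h : IsSolitonProfile m φ) :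
    (fun t => φ t ^ 2) ~[atTop] fun t => (m + 1) ^ 2 * t ^ 2 :=
  (h.isEquivalent_mul.pow 2).congr_right (Eventually.of_forall fun _ => mul_pow _ _ 2)

theorem isEquivalent_id_mul (h : IsSolitonProfile m φ) :
    (fun t => t * φ t) ~[atTop] fun t => (m + 1) * t ^ 2 :=
  (IsEquivalent.refl.mul h.isEquivalent_mul).congr_right
    (Eventually.of_forall fun t => by simp only [Pi.mul_apply]; ring)

theorem deriv_mul_pow_mul_exp (h : IsSolitonProfile m φ) (hd : Differentiable ℝ φ) (t : ℝ) :
    deriv φ t * (φ t ^ m * exp (φ t)) = exp ((m + 1) * t) := by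
  have hL := (hasDerivAt_solitonPoly_mul_exp m (φ t)).comp t (hd t).hasDerivAt
  have hR : HasDerivAt (fun s : ℝ => exp ((m + 1) * s) / (m + 1) + solitonPoly (m + 1) 0)
      (exp ((m + 1) * t)) t := by
    refine ((((hasDerivAt_id t).const_mul ((m : ℝ) + 1)).exp.div_const ((m : ℝ) + 1)).add_const
      _).congr_deriv ?_
    simp only [id, mul_one]
    field_simp
  rw [show (fun y => solitonPoly (m + 1) y * exp y) ∘ φ = _ from funext h.eq] at hL
  rw [mul_comm]
  exact hL.unique hR

theorem deriv_sub_eq (h : IsSolitonProfile m φ) (hd : Differentiable ℝ φ) {t : ℝ}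
    (ht : t ≠ 0) :
    deriv φ t - ((m + 1) - m / t) =
      (m + 1) * (solitonPoly (m + 1) (φ t) / φ t ^ m - (1 - m / φ t))
      + m * ((φ t - (m + 1) * t) * (t * φ t)⁻¹)
      - (m + 1) * solitonPoly (m + 1) 0 * (φ t ^ m * exp (φ t))⁻¹ := by
  have hφ := (h.pos t).ne'
  have hA : φ t ^ m * exp (φ t) ≠ 0 := by positivity
  have hexp : exp ((m + 1) * t)
      = (m + 1) * (solitonPoly (m + 1) (φ t) * exp (φ t) - solitonPoly (m + 1) 0) := by
    rw [h.eq t]; field_simp; ring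
  rw [eq_div_of_mul_eq hA (h.deriv_mul_pow_mul_exp hd t), hexp]
  field_simp
  ring

theorem isBigO_deriv_sub (h : IsSolitonProfile m φ) (hd : Differentiable ℝ φ) :
    (fun t => deriv φ t - ((m + 1) - m / t)) =O[atTop] fun t => log t / t ^ 2 := by
  have h1 : (fun t => solitonPoly (m + 1) (φ t) / φ t ^ m - (1 - m / φ t))
      =O[atTop] fun t => log t / t ^ 2 :=
    (((isBigO_solitonPoly_div_pow_sub m).comp_tendsto h.tendsto_atTop).trans
      (isBigO_inv_sq_of_isEquivalent h.isEquivalent_sq)).trans isBigO_inv_sq_log_div_sq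
  have h2 : (fun t => (φ t - (m + 1) * t) * (t * φ t)⁻¹) =O[atTop] fun t => log t / t ^ 2 := by
    simpa only [div_eq_mul_inv] using
      h.isBigO_sub_mul.mul (isBigO_inv_sq_of_isEquivalent h.isEquivalent_id_mul)
  have h3 : (fun t => (φ t ^ m * exp (φ t))⁻¹) =O[atTop] fun t => log t / t ^ 2 := by
    refine (h.isEquivalent_pow_mul_exp.inv.isBigO.trans ?_).trans isBigO_inv_sq_log_div_sq
    have hexp := (isLittleO_pow_exp_pos_mul_atTop 2 (by positivity : (0 : ℝ) < m + 1)).inv_rev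
      (by filter_upwards [eventually_ne_atTop 0] with t ht h0; exact absurd h0 (pow_ne_zero 2 ht))
    simp only [Pi.inv_def, inv_div]
    simpa only [div_eq_mul_inv] using hexp.isBigO.const_mul_left ((m : ℝ) + 1)
  refine (((h1.const_mul_left ((m : ℝ) + 1)).add (h2.const_mul_left (m : ℝ))).sub
    (h3.const_mul_left (((m : ℝ) + 1) * solitonPoly (m + 1) 0))).congr' ?_ EventuallyEq.rfl
  filter_upwards [eventually_ne_atTop 0] with t ht
  exact (h.deriv_sub_eq hd ht).symm

end IsSolitonProfile

/-- As `t → +∞`, `φ'(t) = n − (n−1)/t + O((log t)/t²)`; in particular `φ'(t) → n`. -/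
theorem stmt_13 (n : ℕ) (hn : 1 ≤ n)
    (F : ℝ → ℝ)
    (hF : ∀ x : ℝ, F x = ∑ r ∈ Finset.range n,
      (-1 : ℝ) ^ (n - r - 1) * ((Nat.factorial (n - 1) : ℝ) / (Nat.factorial r : ℝ)) * x ^ r)
    (φ : ℝ → ℝ) (hφdiff : Differentiable ℝ φ) (hφpos : ∀ t, 0 < φ t)
    (hφeq : ∀ t, F (φ t) * Real.exp (φ t) = Real.exp (n * t) / n + F 0) :
    (fun t => deriv φ t - ((n : ℝ) - ((n : ℝ) - 1) / t))
      =O[atTop] (fun t => Real.log t / t ^ 2) ∧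
    Filter.Tendsto (deriv φ) atTop (nhds (n : ℝ)) := by
  obtain ⟨m, rfl⟩ := Nat.exists_eq_add_of_le' hn
  obtain rfl : F = solitonPoly (m + 1) := funext hF
  have hφ : IsSolitonProfile m φ := ⟨hφpos, by exact_mod_cast hφeq⟩
  have hO : (fun t => deriv φ t - (((m + 1 : ℕ) : ℝ) - (((m + 1 : ℕ) : ℝ) - 1) / t))
      =O[atTop] fun t => log t / t ^ 2 := by
    push_cast
    simpa only [add_sub_cancel_right] using hφ.isBigO_deriv_sub hφdiff
  refine ⟨hO, ?_⟩
  have hlim : Tendsto (fun t : ℝ => ((m + 1 : ℕ) : ℝ) - (((m + 1 : ℕ) : ℝ) - 1) / t) atTop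
      (𝓝 ((m + 1 : ℕ) : ℝ)) := by
    simpa using (tendsto_const_nhds (x := ((m + 1 : ℕ) : ℝ))).sub
      ((tendsto_const_nhds (x := ((m + 1 : ℕ) : ℝ) - 1)).div_atTop tendsto_id)
  simpa using (hO.trans_tendsto tendsto_log_div_sq_atTop).add hlim
end

section
/- Let n ≥ 1 and a > 0, and let φ_a be the solution of F(φ_a(t)) e^{φ_a(t)} = e^{nt}/n + F(a) e^a with φ_a > a. Then for each fixed t ∈ ℝ, φ_a(t + log a)/a → (1 + e^{nt})^{1/n} as a → 0⁺. -/
/-!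
Put `b = φ_a(t + log a)`. Since `F' = s^(n-1) - F`, we have `(F e^s)' = s^(n-1) e^s`, so the
defining equation says `∫_a^b s^(n-1) e^s ds = e^(nt) a^n / n`. Bounding `e^s` on `[a, b]` below
by `1` and above by `e^b` gives `a^n (1 + e^(nt) e^(-b)) ≤ b^n ≤ a^n (1 + e^(nt))`. Hence
`b = O(a) → 0`, and both bounds on `(b/a)^n` tend to `1 + e^(nt)`.
-/

open Real Finset Filter Set
open scoped Topology

noncomputable def calabiPoly (n : ℕ) (x : ℝ) : ℝ :=
  ∑ r ∈ range n,
    (-1 : ℝ) ^ (n - r - 1) * ((Nat.factorial (n - 1) : ℝ) / (Nat.factorial r : ℝ)) * x ^ r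

theorem calabiPoly_succ (n : ℕ) (x : ℝ) :
    calabiPoly (n + 1) x = x ^ n - n * calabiPoly n x := by
  rw [calabiPoly, sum_range_succ, calabiPoly, mul_sum, sub_eq_add_neg, ← sum_neg_distrib,
    add_comm (x ^ n)]
  congr 1
  · refine sum_congr rfl fun r hr => ?_
    obtain ⟨k, rfl⟩ := Nat.exists_eq_add_of_lt (mem_range.1 hr)
    rw [show r + k + 1 + 1 - r - 1 = k + 1 by omega, show r + k + 1 - r - 1 = k by omega,
      Nat.add_sub_cancel, Nat.factorial_succ]
    push_cast
    ring
  · simp [Nat.factorial_ne_zero]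

theorem hasDerivAt_calabiPoly (n : ℕ) (x : ℝ) :
    HasDerivAt (calabiPoly (n + 1)) (x ^ n - calabiPoly (n + 1) x) x := by
  induction n with
  | zero =>
    have h1 : calabiPoly 1 = fun _ => 1 := funext fun y => by simp [calabiPoly]
    simpa [h1] using hasDerivAt_const x (1 : ℝ)
  | succ n ih =>
    rw [show calabiPoly (n + 2) = fun y => y ^ (n + 1) - (n + 1 : ℕ) * calabiPoly (n + 1) y
      from funext fun y => calabiPoly_succ (n + 1) y]
    refine ((hasDerivAt_pow (n + 1) x).fun_sub (ih.const_mul ((n + 1 : ℕ) : ℝ))).congr_deriv ?_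
    rw [Nat.add_sub_cancel]
    push_cast
    ring

theorem hasDerivAt_calabiPoly_mul_exp (n : ℕ) (x : ℝ) :
    HasDerivAt (fun y => calabiPoly (n + 1) y * exp y) (x ^ n * exp x) x :=
  ((hasDerivAt_calabiPoly n x).mul (hasDerivAt_exp x)).congr_deriv (by ring)

theorem integral_pow_le_integral_pow_mul_exp {a b : ℝ} (ha : 0 ≤ a) (hab : a ≤ b) (m : ℕ) :
    ∫ x in a..b, x ^ m ≤ ∫ x in a..b, x ^ m * exp x := by
  refine intervalIntegral.integral_mono_on hab
    (Continuous.intervalIntegrable (by fun_prop) _ _)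
    (Continuous.intervalIntegrable (by fun_prop) _ _) fun x hx => ?_
  have hx0 : 0 ≤ x := ha.trans hx.1
  exact le_mul_of_one_le_right (by positivity) (one_le_exp hx0)

theorem integral_pow_mul_exp_le {a b : ℝ} (ha : 0 ≤ a) (hab : a ≤ b) (m : ℕ) :
    ∫ x in a..b, x ^ m * exp x ≤ (∫ x in a..b, x ^ m) * exp b := by
  rw [← intervalIntegral.integral_mul_const]
  refine intervalIntegral.integral_mono_on hab
    (Continuous.intervalIntegrable (by fun_prop) _ _)
    (Continuous.intervalIntegrable (by fun_prop) _ _) fun x hx => ?_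
  have hx0 : 0 ≤ x := ha.trans hx.1
  exact mul_le_mul_of_nonneg_left (exp_le_exp.2 hx.2) (by positivity)

theorem div_pow_bounds_of_calabiPoly_mul_exp_eq {m : ℕ} {a b E : ℝ} (ha : 0 < a) (hab : a ≤ b)
    (h : calabiPoly (m + 1) b * exp b =
      E * a ^ (m + 1) / (m + 1) + calabiPoly (m + 1) a * exp a) :
    1 + E * exp (-b) ≤ (b / a) ^ (m + 1) ∧ (b / a) ^ (m + 1) ≤ 1 + E := by
  have hI : ∫ x in a..b, x ^ m * exp x = E * a ^ (m + 1) / (m + 1) := by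
    rw [intervalIntegral.integral_eq_sub_of_hasDerivAt
      (fun x _ => hasDerivAt_calabiPoly_mul_exp m x)
      (Continuous.intervalIntegrable (by fun_prop) _ _)]
    linarith
  have hlow := integral_pow_le_integral_pow_mul_exp ha.le hab m
  have hup := integral_pow_mul_exp_le ha.le hab m
  rw [hI, integral_pow] at hlow hup
  have hc : 0 < a ^ (m + 1) := pow_pos ha _
  have hm : (0 : ℝ) < m + 1 := by positivity
  rw [div_pow, le_div_iff₀ hc, div_le_iff₀ hc]
  rw [div_le_div_iff_of_pos_right hm] at hlow
  rw [div_mul_eq_mul_div, div_le_div_iff_of_pos_right hm] at hup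
  have hup' := mul_le_mul_of_nonneg_right hup (exp_pos (-b)).le
  rw [mul_assoc _ (exp b), ← exp_add, add_neg_cancel, exp_zero, mul_one] at hup'
  constructor <;> linarith

theorem tendsto_of_one_add_mul_exp_le_pow {α : Type*} {l : Filter α} {s v : α → ℝ} {E : ℝ}
    {k : ℕ} (hk : k ≠ 0) (hs : Tendsto s l (𝓝 0)) (hs0 : ∀ᶠ x in l, 0 ≤ s x)
    (hv : ∀ᶠ x in l,
      1 ≤ v x ∧ 1 + E * exp (-(s x * v x)) ≤ v x ^ k ∧ v x ^ k ≤ 1 + E) :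
    Tendsto v l (𝓝 ((1 + E) ^ (1 / k : ℝ))) := by
  have hsv : Tendsto (fun x => s x * v x) l (𝓝 0) := by
    refine tendsto_of_tendsto_of_tendsto_of_le_of_le' tendsto_const_nhds
      (by simpa using hs.mul_const (1 + E)) ?_ ?_
    · filter_upwards [hs0, hv] with x hs0 hv using mul_nonneg hs0 (by linarith [hv.1])
    · filter_upwards [hs0, hv] with x hs0 hv
      exact mul_le_mul_of_nonneg_left ((le_self_pow₀ hv.1 hk).trans hv.2.2) hs0
  have hpow : Tendsto (fun x => v x ^ k) l (𝓝 (1 + E)) := by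
    refine tendsto_of_tendsto_of_tendsto_of_le_of_le'
      (by simpa using ((hsv.neg.rexp).const_mul E).const_add 1) tendsto_const_nhds
      (hv.mono fun x hx => hx.2.1) (hv.mono fun x hx => hx.2.2)
  refine (hpow.rpow_const (Or.inr (by positivity))).congr' ?_
  filter_upwards [hv] with x hx
  rw [one_div, pow_rpow_inv_natCast (by linarith [hx.1]) hk]

/-- Bubble limit: for each fixed `t`, `φ_a(t + log a)/a → (1 + e^{nt})^{1/n}` as `a → 0⁺`. -/
theorem stmt_14 (n : ℕ) (hn : 1 ≤ n)
    (F : ℝ → ℝ)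
    (hF : ∀ x : ℝ, F x = ∑ r ∈ Finset.range n,
      (-1 : ℝ) ^ (n - r - 1) * ((Nat.factorial (n - 1) : ℝ) / (Nat.factorial r : ℝ)) * x ^ r)
    (φ : ℝ → ℝ → ℝ)
    (hφa : ∀ a : ℝ, 0 < a → ∀ t, a < φ a t)
    (hφeq : ∀ a : ℝ, 0 < a → ∀ t,
      F (φ a t) * Real.exp (φ a t) = Real.exp (n * t) / n + F a * Real.exp a)
    (t : ℝ) :
    Filter.Tendsto (fun a => φ a (t + Real.log a) / a)
      (nhdsWithin 0 (Set.Ioi 0))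
      (nhds ((1 + Real.exp (n * t)) ^ ((1 : ℝ) / n))) := by
  obtain ⟨m, rfl⟩ := Nat.exists_eq_add_of_le' hn
  obtain rfl : F = calabiPoly (m + 1) := funext hF
  refine tendsto_of_one_add_mul_exp_le_pow (s := id) m.succ_ne_zero
    (tendsto_nhdsWithin_of_tendsto_nhds tendsto_id) ?_ ?_
  · filter_upwards [self_mem_nhdsWithin] with a (ha : 0 < a) using ha.le
  filter_upwards [self_mem_nhdsWithin] with a (ha : 0 < a)
  have hb := hφa a ha (t + log a)
  have hscale : exp ((m + 1 : ℕ) * (t + log a)) = exp ((m + 1 : ℕ) * t) * a ^ (m + 1) := by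
    rw [mul_add, exp_add, exp_nat_mul (log a), exp_log ha]
  obtain ⟨hlow, hup⟩ :=
    div_pow_bounds_of_calabiPoly_mul_exp_eq ha hb.le (E := exp ((m + 1 : ℕ) * t))
      (by rw [hφeq a ha, hscale]; push_cast; rfl)
  exact ⟨(one_le_div ha).2 hb.le, by rwa [id, mul_div_cancel₀ _ ha.ne'], hup⟩
end

section
/- Let δ ∈ (0,1), n ≥ 1, and let φ be smooth with φ^{n-1} φ' e^{φ} = e^{nt}, φ > 0, 0 < φ' < n. Suppose u : (−∞, t₀] → ℝ is a C² radial function satisfying (Δ − X)u = 0, where (Δ − X)u = (4/(φ^{n-1}φ')) ∂_t(φ^{n-1} ∂_t u) + 4 ∂_t u, and suppose e^{δφ(t)} |u(t)| is bounded on (−∞, t₀] for every t₀, with sup over t ≤ t₀ bounded uniformly in t₀. Then u ≡ 0. -/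
open Real

/-- Auxiliary: a real function with `|f| ≤ M` everywhere and `deriv f ≥ K > 0` on
`(-∞, 0]` cannot exist. -/
lemma aux_unbdd (f : ℝ → ℝ) (hf : Differentiable ℝ f) (M K : ℝ) (hK : 0 < K)
    (hb : ∀ t, |f t| ≤ M) (hd : ∀ t ≤ (0:ℝ), K ≤ deriv f t) : False := by
  have h := Convex.mul_sub_le_image_sub_of_le_deriv (convex_Iic (0:ℝ))
      hf.continuous.continuousOn (hf.differentiableOn)
      (C := K) (f := f)
      (fun x hx => hd x (le_of_lt (by simpa [interior_Iic] using hx)))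
  have hM0 : 0 ≤ M := le_trans (abs_nonneg _) (hb 0)
  set s : ℝ := -((2*M+1)/K) with hs
  have hs0 : s ≤ 0 := by
    have : 0 < (2*M+1)/K := by positivity
    simp only [hs]; linarith
  have h2 := h s (Set.mem_Iic.mpr hs0) 0 (Set.mem_Iic.mpr le_rfl) hs0
  have hKs : K * (0 - s) = 2*M + 1 := by
    rw [hs, zero_sub, neg_neg, mul_div_assoc', mul_div_cancel_left₀ _ hK.ne']
  have h3 := abs_le.mp (hb 0)
  have h4 := abs_le.mp (hb s)
  linarith

/-- Radial injectivity: a radial solution of `(Δ − X)u = 0` on the Cao soliton with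
`e^{δφ}|u|` uniformly bounded must vanish identically. -/
theorem stmt_15 (n : ℕ) (hn : 1 ≤ n) (δ : ℝ) (hδ0 : 0 < δ) (hδ1 : δ < 1)
    (φ : ℝ → ℝ) (hφ : ContDiff ℝ (⊤ : ℕ∞) φ) (hφpos : ∀ t, 0 < φ t)
    (hode : ∀ t, φ t ^ (n - 1) * deriv φ t * Real.exp (φ t) = Real.exp (n * t))
    (hφ' : ∀ t, 0 < deriv φ t ∧ deriv φ t < n)
    (u : ℝ → ℝ) (hu : ContDiff ℝ 2 u)
    (huL : ∀ t, (4 / (φ t ^ (n - 1) * deriv φ t)) *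
        deriv (fun s => φ s ^ (n - 1) * deriv u s) t + 4 * deriv u t = 0)
    (M : ℝ) (hbound : ∀ t, Real.exp (δ * φ t) * |u t| ≤ M) :
    ∀ t, u t = 0 := by
  -- differentiability facts
  have hud : Differentiable ℝ u := hu.differentiable (by norm_num)
  have hu2 : ContDiff ℝ 1 (deriv u) := by
    have : ContDiff ℝ (1+1 : ℕ) u := by exact_mod_cast hu
    exact (contDiff_succ_iff_deriv.mp this).2.2
  have hu'd : Differentiable ℝ (deriv u) := hu2.differentiable one_ne_zero
  have hφd : Differentiable ℝ φ := hφ.differentiable (by simp)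
  -- the functions v and g
  set v : ℝ → ℝ := fun s => φ s ^ (n - 1) * deriv u s with hvdef
  have hvd : Differentiable ℝ v := (hφd.pow _).mul hu'd
  have hPpos : ∀ t, 0 < φ t ^ (n - 1) * deriv φ t :=
    fun t => mul_pos (pow_pos (hφpos t) _) (hφ' t).1
  have hderiv_v : ∀ t, deriv v t = -((φ t ^ (n - 1) * deriv φ t) * deriv u t) := by
    intro t
    have h := huL t
    have ha : φ t ^ (n - 1) * deriv φ t ≠ 0 := (hPpos t).ne'
    field_simp at h
    have h' : deriv v t / (φ t ^ (n - 1) * deriv φ t) = -deriv u t := by linarith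
    rw [div_eq_iff ha] at h'
    linear_combination h'
  set g : ℝ → ℝ := fun s => Real.exp (φ s) * v s with hgdef
  have hgd : Differentiable ℝ g := (hφd.exp).mul hvd
  have hgz : ∀ t, deriv g t = 0 := by
    intro t
    have h1 : HasDerivAt (fun s => Real.exp (φ s)) (Real.exp (φ t) * deriv φ t) t := by
      exact (Real.hasDerivAt_exp (φ t)).comp t (hφd t).hasDerivAt
    have h2 : HasDerivAt v (deriv v t) t := (hvd t).hasDerivAt
    have h3 := h1.mul h2
    have : deriv g t = Real.exp (φ t) * deriv φ t * v t + Real.exp (φ t) * deriv v t :=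
      h3.deriv
    rw [this, hderiv_v t]
    simp only [hvdef]
    ring
  have hconst : ∀ t, g t = g 0 := fun t => is_const_of_deriv_eq_zero hgd hgz t 0
  set C : ℝ := g 0 with hC
  -- key identity : exp(nt) * u' = C * φ'
  have hkey : ∀ t, Real.exp (n * t) * deriv u t = C * deriv φ t := by
    intro t
    have h := hconst t
    calc Real.exp (n * t) * deriv u t
        = (φ t ^ (n - 1) * deriv φ t * Real.exp (φ t)) * deriv u t := by rw [hode t]
      _ = deriv φ t * (Real.exp (φ t) * (φ t ^ (n - 1) * deriv u t)) := by ring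
      _ = deriv φ t * C := by rw [← h]
      _ = C * deriv φ t := by ring
  have hderiv_u : ∀ t, deriv u t = C * deriv φ t * Real.exp (-(n * t)) := by
    intro t
    have h := hkey t
    have he : Real.exp (n * t) ≠ 0 := (Real.exp_pos _).ne'
    rw [← h, mul_right_comm, ← Real.exp_add, add_neg_cancel, Real.exp_zero, one_mul]
  -- |u| ≤ M
  have huM : ∀ t, |u t| ≤ M := by
    intro t
    have h1 : (1:ℝ) ≤ Real.exp (δ * φ t) :=
      Real.one_le_exp (mul_nonneg hδ0.le (hφpos t).le)
    calc |u t| = 1 * |u t| := (one_mul _).symm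
      _ ≤ Real.exp (δ * φ t) * |u t| := by
          apply mul_le_mul_of_nonneg_right h1 (abs_nonneg _)
      _ ≤ M := hbound t
  -- lower bound for φ' e^{-nt} on (-∞,0]
  have hmono : StrictMono φ := strictMono_of_deriv_pos (fun t => (hφ' t).1)
  set c : ℝ := Real.exp (-(φ 0)) / φ 0 ^ (n - 1) with hc
  have hcpos : 0 < c := by
    have := hφpos 0
    positivity
  have hlow : ∀ t ≤ (0:ℝ), c ≤ deriv φ t * Real.exp (-(n * t)) := by
    intro t ht
    have hφt := hφpos t
    have hφ0 := hφpos 0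
    have hle : φ t ≤ φ 0 := (hmono.le_iff_le).mpr ht
    have hrw : deriv φ t * Real.exp (-(n * t)) = Real.exp (-(φ t)) / φ t ^ (n - 1) := by
      have h := hode t
      have h1 : φ t ^ (n - 1) ≠ 0 := (pow_pos hφt _).ne'
      have h2 : Real.exp (φ t) ≠ 0 := (Real.exp_pos _).ne'
      have h4 : deriv φ t ≠ 0 := (hφ' t).1.ne'
      rw [eq_div_iff h1, Real.exp_neg, Real.exp_neg, ← hode t]
      field_simp
    rw [hrw]
    have h1 : Real.exp (-(φ 0)) ≤ Real.exp (-(φ t)) := Real.exp_le_exp.mpr (by linarith)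
    have h2 : φ t ^ (n - 1) ≤ φ 0 ^ (n - 1) := pow_le_pow_left₀ hφt.le hle _
    have h3 : 0 < φ t ^ (n - 1) := pow_pos hφt _
    rw [hc]
    apply div_le_div₀ (Real.exp_pos _).le h1 h3 h2
  -- C = 0
  have hC0 : C = 0 := by
    by_contra hC0
    rcases lt_or_gt_of_ne hC0 with hneg | hpos
    · -- C < 0 : apply aux to -u
      refine aux_unbdd (fun s => -u s) hud.neg M ((-C) * c) (by nlinarith)
        (fun t => by simpa using huM t) (fun t ht => ?_)
      have hd : deriv (fun s => -u s) t = -deriv u t := by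
        simpa using deriv.neg (f := u) (x := t)
      rw [hd, hderiv_u t]
      have := hlow t ht
      nlinarith
    · -- C > 0 : apply aux to u
      refine aux_unbdd u hud M (C * c) (by nlinarith) huM (fun t ht => ?_)
      rw [hderiv_u t]
      have := hlow t ht
      nlinarith
  -- u is constant
  have hdu0 : ∀ t, deriv u t = 0 := by
    intro t; rw [hderiv_u t, hC0]; ring
  have hucst : ∀ t, u t = u 0 := fun t => is_const_of_deriv_eq_zero hud hdu0 t 0
  -- φ is unbounded above
  have hunb : ∀ B : ℝ, ∃ t, B < φ t := by
    intro B
    by_contra hB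
    push_neg at hB
    have hB0 : 0 < B := lt_of_lt_of_le (hφpos 0) (hB 0)
    set K : ℝ := B ^ (n - 1) * n * Real.exp B with hKdef
    have hn0 : (0:ℝ) < n := by exact_mod_cast hn
    have hK : 0 < K := by positivity
    set t : ℝ := max 0 (Real.log K + 1) with htdef
    have ht0 : (0:ℝ) ≤ t := le_max_left _ _
    have ht1 : Real.log K + 1 ≤ t := le_max_right _ _
    have hup : Real.exp (n * t) ≤ K := by
      rw [← hode t, hKdef]
      have h1 : φ t ^ (n - 1) ≤ B ^ (n - 1) := pow_le_pow_left₀ (hφpos t).le (hB t) _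
      have h2 : deriv φ t ≤ n := (hφ' t).2.le
      have h3 : Real.exp (φ t) ≤ Real.exp B := Real.exp_le_exp.mpr (hB t)
      have h4 := (hφ' t).1
      have h5 := pow_pos (hφpos t) (n - 1)
      have h6 := Real.exp_pos (φ t)
      have h7 := pow_nonneg (hφpos t).le (n - 1)
      have s1 : φ t ^ (n - 1) * deriv φ t ≤ B ^ (n - 1) * n :=
        mul_le_mul h1 h2 h4.le (pow_nonneg hB0.le _)
      exact mul_le_mul s1 h3 h6.le (mul_nonneg (pow_nonneg hB0.le _) hn0.le)
    have hdn : K < Real.exp (n * t) := by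
      have e1 : K < Real.exp (Real.log K + 1) := by
        rw [Real.exp_add, Real.exp_log hK]
        nlinarith [Real.exp_one_gt_d9]
      have e2 : Real.exp (Real.log K + 1) ≤ Real.exp t := Real.exp_le_exp.mpr ht1
      have hn1 : (1:ℝ) ≤ n := by exact_mod_cast hn
      have e3 : Real.exp t ≤ Real.exp (n * t) := by
        apply Real.exp_le_exp.mpr
        nlinarith
      linarith
    linarith
  -- conclude u 0 = 0
  have hu0 : u 0 = 0 := by
    by_contra h0
    have habs : 0 < |u 0| := abs_pos.mpr h0
    have hMpos : 0 < M :=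
      lt_of_lt_of_le (mul_pos (Real.exp_pos _) habs) (hbound 0)
    obtain ⟨t, ht⟩ := hunb (Real.log (M / |u 0|) / δ)
    have h1 : Real.log (M / |u 0|) < δ * φ t := by
      rw [div_lt_iff₀ hδ0] at ht
      linarith [ht]
    have h2 : M / |u 0| < Real.exp (δ * φ t) := by
      calc M / |u 0| = Real.exp (Real.log (M / |u 0|)) :=
            (Real.exp_log (by positivity)).symm
        _ < Real.exp (δ * φ t) := Real.exp_lt_exp.mpr h1
    have h3 : M < Real.exp (δ * φ t) * |u 0| := by
      rw [div_lt_iff₀ habs] at h2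
      linarith
    have h4 := hbound t
    rw [hucst t] at h4
    linarith
  intro t
  rw [hucst t, hu0]
end

section
/- Suppose g : [T,∞) → ℝ is continuous with |g(t)| ≤ M e^{−δφ(t)} for all t ≥ T, where φ satisfies φ^{n-1} φ' e^φ = e^{nt} with 0 < φ' < n and δ ∈ (0,1), and suppose u solves the radial ODE (4/(φ^{n-1}φ')) (φ^{n-1} u')' + 4u' = g on [T, t₁] with u(t₁) = 0. Then sup_{T ≤ t ≤ t₁} e^{δφ(t)}|u(t)| ≤ max( e^{δφ(T)}|u(T)|, M/(4δ(1−δ)n) ). -/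
set_option maxHeartbeats 1000000


open Real Set

/-- Barrier estimate for the radial drift Laplacian with Dirichlet condition at `t₁`:
if `(Δ−X)u = g` on `[T, t₁]` with `u(t₁) = 0` and `|g| ≤ M e^{−δφ}`, then
`sup_{[T,t₁]} e^{δφ}|u| ≤ max(e^{δφ(T)}|u(T)|, M/(4δ(1−δ)n))`. -/
theorem stmt_17 (n : ℕ) (hn : 1 ≤ n) (δ : ℝ) (hδ0 : 0 < δ) (hδ1 : δ < 1)
    (φ : ℝ → ℝ) (hφ : ContDiff ℝ (⊤ : ℕ∞) φ) (hφpos : ∀ t, 0 < φ t)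
    (hode : ∀ t, φ t ^ (n - 1) * deriv φ t * Real.exp (φ t) = Real.exp (n * t))
    (hφ' : ∀ t, 0 < deriv φ t ∧ deriv φ t < n)
    (T t₁ : ℝ) (hTt₁ : T ≤ t₁)
    (g : ℝ → ℝ) (hg : ContinuousOn g (Set.Ici T))
    (M : ℝ) (hgM : ∀ t, T ≤ t → |g t| ≤ M * Real.exp (-δ * φ t))
    (u : ℝ → ℝ) (hu : ContDiff ℝ 2 u)
    (huode : ∀ t ∈ Set.Icc T t₁,
      (4 / (φ t ^ (n - 1) * deriv φ t)) *
        deriv (fun s => φ s ^ (n - 1) * deriv u s) t + 4 * deriv u t = g t)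
    (hu1 : u t₁ = 0) :
    ∀ t ∈ Set.Icc T t₁,
      Real.exp (δ * φ t) * |u t| ≤
        max (Real.exp (δ * φ T) * |u T|) (M / (4 * δ * (1 - δ) * n)) := by
  have hφd : Differentiable ℝ φ := hφ.differentiable (by simp)
  have hud : Differentiable ℝ u := hu.differentiable (by norm_num)
  have hu'd : Differentiable ℝ (deriv u) := by
    have h2 : ContDiff ℝ ((1:ℕ) + 1) u := by exact_mod_cast hu
    exact ((contDiff_succ_iff_deriv.mp h2).2.2).differentiable (by simp)
  have hcpos : ∀ t, 0 < φ t ^ (n - 1) * Real.exp (φ t) :=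
    fun t => mul_pos (pow_pos (hφpos t) _) (Real.exp_pos _)
  have hnpos : (0:ℝ) < n := by exact_mod_cast hn
  have hMnn : 0 ≤ M := by
    have h1 := hgM T le_rfl
    nlinarith [abs_nonneg (g T), Real.exp_pos (-δ * φ T)]
  have hden : (0:ℝ) < 4 * δ * (1 - δ) * n := by
    have h1 : (0:ℝ) < 1 - δ := by linarith
    positivity
  -- key barrier claim
  have key : ∀ K : ℝ, Real.exp (δ * φ T) * |u T| ≤ K →
      M / (4 * δ * (1 - δ) * n) < K →
      ∀ s : ℝ, s = 1 ∨ s = -1 →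
      ∀ t ∈ Set.Icc T t₁, 0 ≤ K * Real.exp (-δ * φ t) + s * u t := by
    intro K hKT hKM s hs
    have hKpos : 0 < K := lt_of_le_of_lt (div_nonneg hMnn hden.le) hKM
    have hKM' : M < K * (4 * δ * (1 - δ) * n) := (div_lt_iff₀ hden).mp hKM
    set h : ℝ → ℝ := fun t => K * Real.exp (-δ * φ t) + s * u t with hhdef
    have hexpTT : Real.exp (δ * φ T) * Real.exp (-δ * φ T) = 1 := by
      rw [← Real.exp_add]; ring_nf; exact Real.exp_zero
    have hhT : 0 ≤ h T := by
      have h1 : |u T| ≤ K * Real.exp (-δ * φ T) := by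
        have h2 := mul_le_mul_of_nonneg_right hKT (Real.exp_pos (-δ * φ T)).le
        calc |u T| = Real.exp (δ * φ T) * |u T| * Real.exp (-δ * φ T) := by
              rw [mul_comm (Real.exp (δ * φ T)) (|u T|), mul_assoc, hexpTT, mul_one]
          _ ≤ K * Real.exp (-δ * φ T) := h2
      have h3 : -|u T| ≤ s * u T := by
        rcases hs with rfl | rfl
        · simpa using neg_abs_le (u T)
        · have := le_abs_self (u T); nlinarith
      simp only [hhdef]; linarith
    have hht₁ : 0 ≤ h t₁ := by
      simp only [hhdef, hu1, mul_zero, add_zero]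
      positivity
    -- derivative of h
    have hexp : ∀ t, HasDerivAt (fun s => Real.exp (-δ * φ s))
        (Real.exp (-δ * φ t) * (-δ * deriv φ t)) t := by
      intro t
      exact ((hφd t).hasDerivAt.const_mul (-δ)).exp
    have hh' : ∀ t, HasDerivAt h
        (K * (Real.exp (-δ * φ t) * (-δ * deriv φ t)) + s * deriv u t) t := by
      intro t
      exact ((hexp t).const_mul K).add ((hud t).hasDerivAt.const_mul s)
    -- the integrating-factor quantity P
    set P : ℝ → ℝ := fun t => -(K * δ) * Real.exp ((n:ℝ) * t - δ * φ t)
        + s * ((φ t ^ (n - 1) * deriv u t) * Real.exp (φ t)) with hPdef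
    have hexpsplit : ∀ t, Real.exp ((n:ℝ) * t - δ * φ t)
        = Real.exp ((n:ℝ) * t) * Real.exp (-δ * φ t) := by
      intro t; rw [← Real.exp_add]; ring_nf
    have hPh : ∀ t, P t = (φ t ^ (n - 1) * Real.exp (φ t)) * deriv h t := by
      intro t
      rw [(hh' t).deriv]
      simp only [hPdef]
      rw [hexpsplit t, ← hode t]
      ring
    have hΨ : Differentiable ℝ (fun s => φ s ^ (n - 1) * deriv u s) :=
      (hφd.pow (n - 1)).mul hu'd
    have hPd : ∀ t, HasDerivAt P
        (-(K * δ) * (Real.exp ((n:ℝ) * t - δ * φ t) * ((n:ℝ) - δ * deriv φ t))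
          + s * (deriv (fun s => φ s ^ (n - 1) * deriv u s) t * Real.exp (φ t)
              + (φ t ^ (n - 1) * deriv u t) * (Real.exp (φ t) * deriv φ t))) t := by
      intro t
      have h1 : HasDerivAt (fun s => (n:ℝ) * s - δ * φ s) ((n:ℝ) - δ * deriv φ t) t := by
        have := ((hasDerivAt_id t).const_mul (n:ℝ)).sub ((hφd t).hasDerivAt.const_mul δ)
        exact this.congr_deriv (by ring)
      have h2 := h1.exp
      have h3 : HasDerivAt (fun s => φ s ^ (n - 1) * deriv u s)
          (deriv (fun s => φ s ^ (n - 1) * deriv u s) t) t := (hΨ t).hasDerivAt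
      have h4 : HasDerivAt (fun s => Real.exp (φ s)) (Real.exp (φ t) * deriv φ t) t :=
        (hφd t).hasDerivAt.exp
      exact (h2.const_mul (-(K * δ))).add ((h3.mul h4).const_mul s)
    have hPneg : ∀ t ∈ Set.Icc T t₁, deriv P t < 0 := by
      intro t ht
      rw [(hPd t).deriv]
      have hc' : (0:ℝ) < φ t ^ (n - 1) * deriv φ t :=
        mul_pos (pow_pos (hφpos t) _) (hφ' t).1
      have hD : deriv (fun s => φ s ^ (n - 1) * deriv u s) t
          = (g t - 4 * deriv u t) * (φ t ^ (n - 1) * deriv φ t) / 4 := by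
        have h6 := huode t ht
        field_simp at h6 ⊢
        have hc0 := hc'.ne'
        rw [← h6]
        field_simp
        rw [add_sub_cancel_right, mul_div_cancel₀ _ hc0]
      rw [hD]
      have hval : -(K * δ) * (Real.exp ((n:ℝ) * t - δ * φ t) * ((n:ℝ) - δ * deriv φ t))
            + s * ((g t - 4 * deriv u t) * (φ t ^ (n - 1) * deriv φ t) / 4 * Real.exp (φ t)
              + (φ t ^ (n - 1) * deriv u t) * (Real.exp (φ t) * deriv φ t))
          = -(K * δ) * (Real.exp ((n:ℝ) * t - δ * φ t) * ((n:ℝ) - δ * deriv φ t))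
            + s * (Real.exp ((n:ℝ) * t) * g t) / 4 := by
        linear_combination (s * g t / 4) * hode t
      rw [hval]
      set E := Real.exp ((n:ℝ) * t - δ * φ t) with hE
      have hEpos : 0 < E := Real.exp_pos _
      have hFpos : 0 < Real.exp ((n:ℝ) * t) := Real.exp_pos _
      have hsg : s * (Real.exp ((n:ℝ) * t) * g t) ≤ Real.exp ((n:ℝ) * t) * |g t| := by
        rcases hs with rfl | rfl
        · have := le_abs_self (g t); nlinarith
        · have := neg_abs_le (g t); nlinarith
      have hgb : Real.exp ((n:ℝ) * t) * |g t| ≤ M * E := by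
        have := hgM t ht.1
        have h7 : Real.exp ((n:ℝ) * t) * |g t|
            ≤ Real.exp ((n:ℝ) * t) * (M * Real.exp (-δ * φ t)) :=
          mul_le_mul_of_nonneg_left this hFpos.le
        calc Real.exp ((n:ℝ) * t) * |g t|
            ≤ Real.exp ((n:ℝ) * t) * (M * Real.exp (-δ * φ t)) := h7
          _ = M * E := by rw [hE, hexpsplit t]; ring
      have hφ'b : δ * deriv φ t ≤ δ * n := by
        have := (hφ' t).2; nlinarith
      have hnd : (1 - δ) * n ≤ (n:ℝ) - δ * deriv φ t := by nlinarith
      nlinarith [mul_le_mul_of_nonneg_left hnd (mul_pos (mul_pos hKpos hδ0) hEpos).le,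
        mul_pos (mul_pos (mul_pos hKpos hδ0) (by linarith : (0:ℝ) < 1 - δ)) hEpos]
    have hPanti : StrictAntiOn P (Set.Icc T t₁) := by
      apply strictAntiOn_of_deriv_neg (convex_Icc T t₁)
      · exact fun x _ => (hPd x).continuousAt.continuousWithinAt
      · intro x hx
        rw [interior_Icc] at hx
        exact hPneg x (Ioo_subset_Icc_self hx)
    intro t ht
    by_contra hneg
    push_neg at hneg
    have hneg' : h t < 0 := hneg
    have htT : T < t := by
      rcases eq_or_lt_of_le ht.1 with rfl | h
      · exact absurd hhT (not_le.mpr hneg')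
      · exact h
    have htt₁ : t < t₁ := by
      rcases eq_or_lt_of_le ht.2 with rfl | h
      · exact absurd hht₁ (not_le.mpr hneg')
      · exact h
    rcases le_or_gt (P t) 0 with hP0 | hP0
    · have hanti : StrictAntiOn h (Set.Icc t t₁) := by
        apply strictAntiOn_of_deriv_neg (convex_Icc t t₁)
        · exact fun x _ => (hh' x).continuousAt.continuousWithinAt
        · intro x hx
          rw [interior_Icc] at hx
          have hxI : x ∈ Set.Icc T t₁ := ⟨le_trans ht.1 hx.1.le, hx.2.le⟩
          have hPx : P x < P t := hPanti ht hxI hx.1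
          have heq := hPh x
          have hcx := hcpos x
          by_contra h0
          push_neg at h0
          nlinarith [mul_nonneg hcx.le h0]
      have := hanti (Set.left_mem_Icc.mpr htt₁.le) (Set.right_mem_Icc.mpr htt₁.le) htt₁
      linarith
    · have hmono : StrictMonoOn h (Set.Icc T t) := by
        apply strictMonoOn_of_deriv_pos (convex_Icc T t)
        · exact fun x _ => (hh' x).continuousAt.continuousWithinAt
        · intro x hx
          rw [interior_Icc] at hx
          have hxI : x ∈ Set.Icc T t₁ := ⟨hx.1.le, le_trans hx.2.le ht.2⟩
          have hPx : P t < P x := hPanti hxI ht hx.2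
          have heq := hPh x
          have hcx := hcpos x
          by_contra h0
          push_neg at h0
          nlinarith [mul_nonneg hcx.le (neg_nonneg.mpr h0)]
      have := hmono (Set.left_mem_Icc.mpr htT.le) (Set.right_mem_Icc.mpr htT.le) htT
      linarith
  -- conclude
  intro t ht
  have hexptt : Real.exp (δ * φ t) * Real.exp (-δ * φ t) = 1 := by
    rw [← Real.exp_add]; ring_nf; exact Real.exp_zero
  apply le_of_forall_pos_le_add
  intro ε hε
  set A := max (Real.exp (δ * φ T) * |u T|) (M / (4 * δ * (1 - δ) * (n:ℝ))) with hA
  have hA1 : Real.exp (δ * φ T) * |u T| ≤ A + ε := le_add_of_le_of_nonneg (le_max_left _ _) hε.le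
  have hA2 : M / (4 * δ * (1 - δ) * (n:ℝ)) < A + ε :=
    lt_add_of_le_of_pos (le_max_right _ _) hε
  have k1 := key (A + ε) hA1 hA2 1 (Or.inl rfl) t ht
  have k2 := key (A + ε) hA1 hA2 (-1) (Or.inr rfl) t ht
  have habs : |u t| ≤ (A + ε) * Real.exp (-δ * φ t) := by
    rw [abs_le]; constructor <;> nlinarith
  calc Real.exp (δ * φ t) * |u t|
      ≤ Real.exp (δ * φ t) * ((A + ε) * Real.exp (-δ * φ t)) :=
        mul_le_mul_of_nonneg_left habs (Real.exp_pos _).le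
    _ = (A + ε) * (Real.exp (δ * φ t) * Real.exp (-δ * φ t)) := by ring
    _ = A + ε := by rw [hexptt, mul_one]
end
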